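/- arXiv:2003.01899 — 6 statements merged into one kernel-verified Lean document; each statement's English description precedes it below -/
import Mathlib

section
/- Suppose U⁰ is nonempty, bounded, and has nonempty interior, and let Γ ≥ 0 and R ⊆ ℝ^J be nonempty. Then for every choice of difference vectors d_1,…,d_K ∈ ℝ^J: ⨅_{s ∈ {−1,0,1}^K : U_Γ(d,s) ≠ ∅} ⨆_{x∈R} ⨅_{u∈U_Γ(d,s)} u·x = ⨅_{s∈{−1,1}^K} ⨆_{x∈R} ⨅_{u∈Ũ_Γ(d,s)} u·x. Consequently, the offline max-min utility elicitation problem with strict uncertainty sets and adversary restricted to compatible responses, and its variant with closed uncertainty sets and responses restricted to {−1,1}^K, have the same optimal value and the same sets of optimal queries. -/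
open scoped BigOperators

noncomputable section

/-- The initial uncertainty set `U⁰ = {u : Bu ≥ b}`. -/
def U0 {J M : ℕ} (B : Matrix (Fin M) (Fin J) ℝ) (b : Fin M → ℝ) : Set (Fin J → ℝ) :=
  {u | ∀ m, b m ≤ B.mulVec u m}

/-- The inconsistency budget set `E_Γ`. -/
def EGamma (K : ℕ) (Γ : ℝ) : Set (Fin K → ℝ) :=
  {ε | (∀ κ, 0 ≤ ε κ) ∧ ∑ κ, ε κ ≤ Γ}

/-- The strict updated uncertainty set `U_Γ(d,s)` for `s ∈ {−1,0,1}^K`. -/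
def Ustrict {J M K : ℕ} (B : Matrix (Fin M) (Fin J) ℝ) (b : Fin M → ℝ)
    (Γ : ℝ) (d : Fin K → Fin J → ℝ) (s : Fin K → ℤ) : Set (Fin J → ℝ) :=
  {u | u ∈ U0 B b ∧ ∃ ε ∈ EGamma K Γ,
      (∀ κ, s κ = 1 → -ε κ < ∑ j, u j * d κ j) ∧
      (∀ κ, s κ = 0 → |∑ j, u j * d κ j| ≤ ε κ) ∧
      (∀ κ, s κ = -1 → ∑ j, u j * d κ j < ε κ)}

/-- The closed updated uncertainty set `Ũ_Γ(d,s)` for `s ∈ {−1,1}^K`. -/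
def Utilde {J M K : ℕ} (B : Matrix (Fin M) (Fin J) ℝ) (b : Fin M → ℝ)
    (Γ : ℝ) (d : Fin K → Fin J → ℝ) (s : Fin K → ℤ) : Set (Fin J → ℝ) :=
  {u | u ∈ U0 B b ∧ ∃ ε ∈ EGamma K Γ,
      (∀ κ, s κ = 1 → -ε κ ≤ ∑ j, u j * d κ j) ∧
      (∀ κ, s κ = -1 → ∑ j, u j * d κ j ≤ ε κ)}

namespace OfflineMMUAux

variable {J M K : ℕ}

/-- The slack expression `σ_κ · (u·d_κ) + ε_κ`. -/
def eexpr (d : Fin K → Fin J → ℝ) (s : Fin K → ℤ) (κ : Fin K)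
    (u : Fin J → ℝ) (ε : Fin K → ℝ) : ℝ :=
  (s κ : ℝ) * (∑ j, u j * d κ j) + ε κ

/-- The constraint system for membership of `(u,ε)` in the closed set. -/
def Csat (B : Matrix (Fin M) (Fin J) ℝ) (b : Fin M → ℝ) (Γ : ℝ)
    (d : Fin K → Fin J → ℝ) (s : Fin K → ℤ) (u : Fin J → ℝ) (ε : Fin K → ℝ) : Prop :=
  (∀ m, b m ≤ B.mulVec u m) ∧ (∀ κ, 0 ≤ ε κ) ∧ (∑ κ, ε κ) ≤ Γ ∧
    ∀ κ, 0 ≤ eexpr d s κ u ε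

/-- Convex combination of two vectors. -/
def combo {n : ℕ} (t : ℝ) (u v : Fin n → ℝ) : Fin n → ℝ :=
  fun j => (1 - t) * u j + t * v j

lemma sum_combo_mul {n : ℕ} (t : ℝ) (u v w : Fin n → ℝ) :
    ∑ j, combo t u v j * w j = (1 - t) * (∑ j, u j * w j) + t * (∑ j, v j * w j) := by
  rw [Finset.mul_sum, Finset.mul_sum, ← Finset.sum_add_distrib]
  exact Finset.sum_congr rfl fun j _ => by simp [combo]; ring

lemma sum_combo {n : ℕ} (t : ℝ) (u v : Fin n → ℝ) :
    ∑ j, combo t u v j = (1 - t) * (∑ j, u j) + t * (∑ j, v j) := by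
  rw [Finset.mul_sum, Finset.mul_sum, ← Finset.sum_add_distrib]
  exact Finset.sum_congr rfl fun j _ => by simp [combo]

lemma mulVec_combo (B : Matrix (Fin M) (Fin J) ℝ) (t : ℝ) (u v : Fin J → ℝ) (m : Fin M) :
    B.mulVec (combo t u v) m = (1 - t) * B.mulVec u m + t * B.mulVec v m := by
  simp only [Matrix.mulVec, dotProduct]
  rw [Finset.mul_sum, Finset.mul_sum, ← Finset.sum_add_distrib]
  exact Finset.sum_congr rfl fun j _ => by simp [combo]; ring

lemma eexpr_combo (d : Fin K → Fin J → ℝ) (s : Fin K → ℤ) (κ : Fin K) (t : ℝ)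
    (u v : Fin J → ℝ) (ε η : Fin K → ℝ) :
    eexpr d s κ (combo t u v) (combo t ε η)
      = (1 - t) * eexpr d s κ u ε + t * eexpr d s κ v η := by
  unfold eexpr
  rw [sum_combo_mul]
  simp only [combo]
  ring

lemma Csat_combo {B : Matrix (Fin M) (Fin J) ℝ} {b : Fin M → ℝ} {Γ : ℝ}
    {d : Fin K → Fin J → ℝ} {s : Fin K → ℤ} {t : ℝ} (ht0 : 0 ≤ t) (ht1 : t ≤ 1)
    {u v : Fin J → ℝ} {ε η : Fin K → ℝ}
    (h1 : Csat B b Γ d s u ε) (h2 : Csat B b Γ d s v η) :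
    Csat B b Γ d s (combo t u v) (combo t ε η) := by
  obtain ⟨a1, a2, a3, a4⟩ := h1
  obtain ⟨c1, c2, c3, c4⟩ := h2
  refine ⟨fun m => ?_, fun κ => ?_, ?_, fun κ => ?_⟩
  · rw [mulVec_combo]; nlinarith [a1 m, c1 m]
  · simp only [combo]; nlinarith [a2 κ, c2 κ]
  · rw [sum_combo]; nlinarith
  · rw [eexpr_combo]; nlinarith [a4 κ, c4 κ]

/-- There is a point of the constraint system which is simultaneously strict at every
index where strictness is possible at all. -/
lemma exists_strict {B : Matrix (Fin M) (Fin J) ℝ} {b : Fin M → ℝ} {Γ : ℝ}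
    {d : Fin K → Fin J → ℝ} {s : Fin K → ℤ}
    (h0 : ∃ u ε, Csat B b Γ d s u ε) :
    ∃ u ε, Csat B b Γ d s u ε ∧
      ∀ κ, (∃ u' ε', Csat B b Γ d s u' ε' ∧ 0 < eexpr d s κ u' ε') →
        0 < eexpr d s κ u ε := by
  classical
  obtain ⟨u0, ε0, h0⟩ := h0
  suffices h : ∀ A : Finset (Fin K), ∃ u ε, Csat B b Γ d s u ε ∧
      ∀ κ ∈ A, (∃ u' ε', Csat B b Γ d s u' ε' ∧ 0 < eexpr d s κ u' ε') →
        0 < eexpr d s κ u ε by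
    obtain ⟨u, ε, h1, h2⟩ := h Finset.univ
    exact ⟨u, ε, h1, fun κ hκ => h2 κ (Finset.mem_univ κ) hκ⟩
  intro A
  induction A using Finset.induction_on with
  | empty => exact ⟨u0, ε0, h0, by simp⟩
  | @insert a A ha IH =>
    obtain ⟨u1, ε1, hC1, hs1⟩ := IH
    by_cases hA : ∃ u' ε', Csat B b Γ d s u' ε' ∧ 0 < eexpr d s a u' ε'
    · obtain ⟨u2, ε2, hC2, he2⟩ := hA
      refine ⟨combo (1/2) u1 u2, combo (1/2) ε1 ε2,
        Csat_combo (by norm_num) (by norm_num) hC1 hC2, ?_⟩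
      intro κ hκ hex
      rw [eexpr_combo]
      rcases Finset.mem_insert.mp hκ with h | h
      · subst h; nlinarith [hC1.2.2.2 κ, he2]
      · nlinarith [hs1 κ h hex, hC2.2.2.2 κ]
    · refine ⟨u1, ε1, hC1, fun κ hκ hex => ?_⟩
      rcases Finset.mem_insert.mp hκ with h | h
      · exact absurd hex (h ▸ hA)
      · exact hs1 κ h hex

end OfflineMMUAux

open OfflineMMUAux

theorem offline_mmu_strict_eq_closed
    {J M K : ℕ} (B : Matrix (Fin M) (Fin J) ℝ) (b : Fin M → ℝ)
    (hne : (U0 B b).Nonempty) (hbd : Bornology.IsBounded (U0 B b))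
    (hint : (interior (U0 B b)).Nonempty)
    (Γ : ℝ) (hΓ : 0 ≤ Γ)
    (R : Set (Fin J → ℝ)) (hR : R.Nonempty)
    (d : Fin K → Fin J → ℝ) :
    (⨅ s ∈ {s : Fin K → ℤ | (∀ κ, s κ = -1 ∨ s κ = 0 ∨ s κ = 1) ∧
          (Ustrict B b Γ d s).Nonempty},
        ⨆ x ∈ R, ⨅ u ∈ Ustrict B b Γ d s, ((∑ j, u j * x j : ℝ) : EReal))
      = ⨅ s ∈ {s : Fin K → ℤ | ∀ κ, s κ = -1 ∨ s κ = 1},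
        ⨆ x ∈ R, ⨅ u ∈ Utilde B b Γ d s, ((∑ j, u j * x j : ℝ) : EReal) := by
  classical
  apply le_antisymm
  · -- LHS ≤ RHS
    refine le_iInf₂ fun s hs => ?_
    by_cases hty : (Utilde B b Γ d s).Nonempty
    swap
    · -- empty closed set: value is ⊤
      obtain ⟨x0, hx0⟩ := hR
      have h1 : (⨅ u ∈ Utilde B b Γ d s, ((∑ j, u j * x0 j : ℝ) : EReal)) = ⊤ := by
        rw [Set.not_nonempty_iff_eq_empty] at hty
        simp [hty]
      refine le_trans le_top (le_iSup₂_of_le x0 hx0 h1.ge)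
    -- main case : Utilde s is nonempty
    obtain ⟨u0, hU0, ε0, ⟨hε0n, hε0s⟩, hpos0, hneg0⟩ := hty
    -- translate to the Csat form
    have toC : ∀ u : Fin J → ℝ, u ∈ Utilde B b Γ d s → ∃ ε, Csat B b Γ d s u ε := by
      rintro u ⟨hU, ε, ⟨hεn, hεs⟩, hp, hn⟩
      refine ⟨ε, hU, hεn, hεs, fun κ => ?_⟩
      rcases hs κ with h | h
      · have := hn κ h
        simp only [eexpr, h]
        push_cast
        linarith
      · have := hp κ h
        simp only [eexpr, h]
        push_cast
        linarith
    have hC0 : ∃ u ε, Csat B b Γ d s u ε := by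
      obtain ⟨ε, hε⟩ := toC u0 ⟨hU0, ε0, ⟨hε0n, hε0s⟩, hpos0, hneg0⟩
      exact ⟨u0, ε, hε⟩
    obtain ⟨ub, εb, hCb, hstrict⟩ := exists_strict hC0
    set P : Fin K → Prop := fun κ => ∃ u' ε', Csat B b Γ d s u' ε' ∧ 0 < eexpr d s κ u' ε'
      with hP
    set s' : Fin K → ℤ := fun κ => if P κ then s κ else 0 with hs'def
    -- facts about κ with ¬ P κ
    have hzero : ∀ κ, ¬ P κ → ∀ u ε, Csat B b Γ d s u ε → eexpr d s κ u ε = 0 := by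
      intro κ hnP u ε hC
      have h1 : ¬ (0 < eexpr d s κ u ε) := fun h => hnP ⟨u, ε, hC, h⟩
      have h2 := hC.2.2.2 κ
      linarith [not_lt.mp h1]
    -- from eexpr = 0 and Csat, get |u·d| ≤ ε
    have habs : ∀ κ (u : Fin J → ℝ) (ε : Fin K → ℝ), Csat B b Γ d s u ε →
        eexpr d s κ u ε = 0 → |∑ j, u j * d κ j| ≤ ε κ := by
      intro κ u ε hC h0
      have hεn := hC.2.1 κ
      rw [abs_le]
      rcases hs κ with h | h <;> simp only [eexpr, h] at h0 <;> push_cast at h0 <;>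
        constructor <;> linarith
    -- membership data for a combo point
    have mem_strict : ∀ (u : Fin J → ℝ) (ε : Fin K → ℝ), Csat B b Γ d s u ε →
        ∀ t : ℝ, 0 < t → t ≤ 1 → combo t u ub ∈ Ustrict B b Γ d s' := by
      intro u ε hC t ht0 ht1
      have hCc : Csat B b Γ d s (combo t u ub) (combo t ε εb) :=
        Csat_combo (le_of_lt ht0) ht1 hC hCb
      have hstr : ∀ κ, P κ → 0 < eexpr d s κ (combo t u ub) (combo t ε εb) := by
        intro κ hPκ
        rw [eexpr_combo]
        nlinarith [hC.2.2.2 κ, hstrict κ hPκ]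
      have hzer : ∀ κ, ¬ P κ → eexpr d s κ (combo t u ub) (combo t ε εb) = 0 := by
        intro κ hnP
        rw [eexpr_combo, hzero κ hnP u ε hC, hzero κ hnP ub εb hCb]
        ring
      refine ⟨hCc.1, combo t ε εb, ⟨hCc.2.1, hCc.2.2.1⟩, ?_, ?_, ?_⟩
      · intro κ hκ1
        by_cases hPκ : P κ
        · have hsκ : s κ = 1 := by simpa [hs'def, hPκ] using hκ1
          have := hstr κ hPκ
          simp only [eexpr, hsκ] at this
          push_cast at this
          linarith
        · exact absurd hκ1 (by simp [hs'def, hPκ])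
      · intro κ hκ0
        by_cases hPκ : P κ
        · exfalso
          have : s κ = 0 := by simpa [hs'def, hPκ] using hκ0
          rcases hs κ with h | h <;> omega
        · exact habs κ _ _ hCc (hzer κ hPκ)
      · intro κ hκn
        by_cases hPκ : P κ
        · have hsκ : s κ = -1 := by simpa [hs'def, hPκ] using hκn
          have := hstr κ hPκ
          simp only [eexpr, hsκ] at this
          push_cast at this
          linarith
        · exact absurd hκn (by simp [hs'def, hPκ])
    -- s' is an admissible index on the left
    have hs'mem : s' ∈ {s : Fin K → ℤ | (∀ κ, s κ = -1 ∨ s κ = 0 ∨ s κ = 1) ∧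
        (Ustrict B b Γ d s').Nonempty} := by
      constructor
      · intro κ
        by_cases hPκ : P κ
        · rcases hs κ with h | h <;> simp [hs'def, hPκ, h]
        · simp [hs'def, hPκ]
      · -- ub itself: combo 1 u0C ub = ub... use t = 1 with base point from hC0
        obtain ⟨uu, εε, hCuu⟩ := hC0
        exact ⟨combo 1 uu ub, mem_strict uu εε hCuu 1 one_pos le_rfl⟩
    refine iInf₂_le_of_le s' hs'mem ?_
    refine iSup₂_mono fun x _ => ?_
    refine le_iInf₂ fun u hu => ?_
    -- density argument
    obtain ⟨ε, hCu⟩ := toC u hu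
    set r : ℝ := ∑ j, u j * x j with hr
    set r' : ℝ := ∑ j, ub j * x j with hr'
    have key : ∀ t : ℝ, 0 < t → t ≤ 1 →
        (⨅ u' ∈ Ustrict B b Γ d s', ((∑ j, u' j * x j : ℝ) : EReal))
          ≤ (((1 - t) * r + t * r' : ℝ) : EReal) := by
      intro t ht0 ht1
      have hmem := mem_strict u ε hCu t ht0 ht1
      have hval : (∑ j, combo t u ub j * x j) = (1 - t) * r + t * r' := sum_combo_mul t u ub x
      calc (⨅ u' ∈ Ustrict B b Γ d s', ((∑ j, u' j * x j : ℝ) : EReal))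
          ≤ ((∑ j, combo t u ub j * x j : ℝ) : EReal) := iInf₂_le _ hmem
        _ = (((1 - t) * r + t * r' : ℝ) : EReal) := by rw [hval]
    by_contra hcon
    push_neg at hcon
    obtain ⟨z, hz1, hz2⟩ := EReal.exists_between_coe_real hcon
    have hrz : r < z := EReal.coe_lt_coe_iff.mp hz1
    rcases le_or_gt r' r with hle | hlt
    · have h1 := key 1 one_pos le_rfl
      have h2 : (((1 - 1) * r + 1 * r' : ℝ) : EReal) ≤ ((r : ℝ) : EReal) := by
        apply EReal.coe_le_coe_iff.mpr; linarith
      exact absurd hcon (not_lt.mpr (h1.trans h2))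
    · set t : ℝ := min 1 ((z - r) / (2 * (r' - r))) with htdef
      have hc : 0 < r' - r := by linarith
      have ht0 : 0 < t := lt_min one_pos (div_pos (by linarith) (by linarith))
      have ht1 : t ≤ 1 := min_le_left _ _
      have ht2 : t ≤ (z - r) / (2 * (r' - r)) := min_le_right _ _
      have hsmall : (1 - t) * r + t * r' < z := by
        have h3 : t * (r' - r) ≤ ((z - r) / (2 * (r' - r))) * (r' - r) :=
          mul_le_mul_of_nonneg_right ht2 (le_of_lt hc)
        have h4 : ((z - r) / (2 * (r' - r))) * (r' - r) = (z - r) / 2 := by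
          field_simp
        nlinarith
      have h5 := key t ht0 ht1
      have h6 : (((1 - t) * r + t * r' : ℝ) : EReal) < ((z : ℝ) : EReal) :=
        EReal.coe_lt_coe_iff.mpr hsmall
      exact absurd ((h5.trans_lt h6).trans hz2) (lt_irrefl _)
  · -- RHS ≤ LHS
    refine le_iInf₂ fun s hs => ?_
    obtain ⟨hsv, hnes⟩ := hs
    set s'' : Fin K → ℤ := fun κ => if s κ = 0 then 1 else s κ with hs''def
    have hmem : s'' ∈ {s : Fin K → ℤ | ∀ κ, s κ = -1 ∨ s κ = 1} := by
      intro κ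
      rcases hsv κ with h | h | h <;> simp [hs''def, h]
    refine iInf₂_le_of_le s'' hmem ?_
    refine iSup₂_mono fun x _ => ?_
    refine biInf_mono fun u hu => ?_
    obtain ⟨hU, ε, hε, hp, hz, hn⟩ := hu
    refine ⟨hU, ε, hε, fun κ hκ => ?_, fun κ hκ => ?_⟩
    · by_cases h0 : s κ = 0
      · have := abs_le.mp (hz κ h0)
        linarith [this.1]
      · have hsκ : s κ = 1 := by
          simp only [hs''def] at hκ
          rw [if_neg h0] at hκ
          exact hκ
        exact le_of_lt (hp κ hsκ)
    · have hsκ : s κ = -1 := by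
        by_cases h0 : s κ = 0
        · simp [hs''def, h0] at hκ
        · simpa [hs''def, h0] using hκ
      exact le_of_lt (hn κ hsκ)
end
end

section
/- For s ∈ {−1,0,1}^K let s' ∈ {−1,1}^K be given by s'_κ = s_κ if s_κ ≠ 0 and s'_κ = 1 otherwise. Then Ū_Γ(d,s) ⊆ Ũ_Γ(d,s'). Consequently, for every nonempty R ⊆ ℝ^J, ⨅_{s∈{−1,0,1}^K} ⨆_{x∈R} ⨅_{u∈Ū_Γ(d,s)} u·x = ⨅_{s∈{−1,1}^K} ⨆_{x∈R} ⨅_{u∈Ũ_Γ(d,s)} u·x; that is, indifference responses can be dropped without changing the worst-case value of the offline max-min utility elicitation problem with closed uncertainty sets. -/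
open scoped BigOperators

noncomputable section

/-- The loose updated uncertainty set `Ū_Γ(d,s)` for `s ∈ {−1,0,1}^K`. -/
def Ubar {J M K : ℕ} (B : Matrix (Fin M) (Fin J) ℝ) (b : Fin M → ℝ)
    (Γ : ℝ) (d : Fin K → Fin J → ℝ) (s : Fin K → ℤ) : Set (Fin J → ℝ) :=
  {u | u ∈ U0 B b ∧ ∃ ε ∈ EGamma K Γ,
      (∀ κ, s κ = 1 → -ε κ ≤ ∑ j, u j * d κ j) ∧
      (∀ κ, s κ = 0 → |∑ j, u j * d κ j| ≤ ε κ) ∧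
      (∀ κ, s κ = -1 → ∑ j, u j * d κ j ≤ ε κ)}

/-- The scenario `s'` obtained from `s` by replacing indifference responses by `1`. -/
def sPrime {K : ℕ} (s : Fin K → ℤ) : Fin K → ℤ := fun κ => if s κ = 0 then 1 else s κ

theorem offline_mmu_drop_indifference
    {J M K : ℕ} (B : Matrix (Fin M) (Fin J) ℝ) (b : Fin M → ℝ)
    (Γ : ℝ) (hΓ : 0 ≤ Γ) (d : Fin K → Fin J → ℝ) :
    (∀ s : Fin K → ℤ, (∀ κ, s κ = -1 ∨ s κ = 0 ∨ s κ = 1) →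
        Ubar B b Γ d s ⊆ Utilde B b Γ d (sPrime s)) ∧
      ∀ R : Set (Fin J → ℝ), R.Nonempty →
        (⨅ s ∈ {s : Fin K → ℤ | ∀ κ, s κ = -1 ∨ s κ = 0 ∨ s κ = 1},
            ⨆ x ∈ R, ⨅ u ∈ Ubar B b Γ d s, ((∑ j, u j * x j : ℝ) : EReal))
          = ⨅ s ∈ {s : Fin K → ℤ | ∀ κ, s κ = -1 ∨ s κ = 1},
            ⨆ x ∈ R, ⨅ u ∈ Utilde B b Γ d s, ((∑ j, u j * x j : ℝ) : EReal) := by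
  have hsub : ∀ s : Fin K → ℤ, (∀ κ, s κ = -1 ∨ s κ = 0 ∨ s κ = 1) →
      Ubar B b Γ d s ⊆ Utilde B b Γ d (sPrime s) := by
    intro s _hs u hu
    obtain ⟨hu0, ε, hε, h1, h0, hm1⟩ := hu
    refine ⟨hu0, ε, hε, ?_, ?_⟩
    · intro κ hκ
      by_cases h : s κ = 0
      · linarith [abs_le.mp (h0 κ h)]
      · exact h1 κ (by simpa [sPrime, h] using hκ)
    · intro κ hκ
      by_cases h : s κ = 0
      · simp [sPrime, h] at hκ
      · exact hm1 κ (by simpa [sPrime, h] using hκ)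
  refine ⟨hsub, ?_⟩
  intro R _hR
  apply le_antisymm
  · refine le_iInf₂ fun s hs => ?_
    have hs3 : s ∈ {s : Fin K → ℤ | ∀ κ, s κ = -1 ∨ s κ = 0 ∨ s κ = 1} :=
      fun κ => (hs κ).elim Or.inl (fun h => Or.inr (Or.inr h))
    have heq : Ubar B b Γ d s = Utilde B b Γ d s := by
      ext u
      constructor
      · rintro ⟨hu0, ε, hε, h1, _h0, hm1⟩; exact ⟨hu0, ε, hε, h1, hm1⟩
      · rintro ⟨hu0, ε, hε, h1, hm1⟩
        refine ⟨hu0, ε, hε, h1, fun κ hκ => ?_, hm1⟩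
        rcases hs κ with h | h <;> omega
    have := iInf₂_le (f := fun s _ =>
      ⨆ x ∈ R, ⨅ u ∈ Ubar B b Γ d s, ((∑ j, u j * x j : ℝ) : EReal)) s hs3
    rw [heq] at this
    exact this
  · refine le_iInf₂ fun s hs => ?_
    have hs' : sPrime s ∈ {s : Fin K → ℤ | ∀ κ, s κ = -1 ∨ s κ = 1} := by
      intro κ
      rcases hs κ with h | h | h <;> simp [sPrime, h]
    refine le_trans (iInf₂_le (f := fun t _ =>
      ⨆ x ∈ R, ⨅ u ∈ Utilde B b Γ d t, ((∑ j, u j * x j : ℝ) : EReal)) (sPrime s) hs') ?_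
    refine iSup₂_mono fun x _hx => ?_
    exact le_iInf₂ fun u hu => iInf₂_le u (hsub s hs hu)
end
end

section
/- Suppose U⁰ is nonempty and bounded and R ⊆ ℝ^J is nonempty, convex, and compact. Then for every Γ ≥ 0, every K ∈ ℕ, and every choice of difference vectors d_1,…,d_K ∈ ℝ^J, ⨅_{s∈{−1,1}^K} ⨆_{x∈R} ⨅_{u∈Ũ_Γ(d,s)} u·x = ⨆_{x∈R} ⨅_{u∈U⁰} u·x. In particular, when the recommendation set is convex, asking comparison queries yields no improvement in worst-case utility: the K-query offline max-min utility elicitation problem has the same optimal value as the problem with no queries, namely max_{x∈R} min_{u∈U⁰} u·x. -/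
open scoped BigOperators

noncomputable section

/-- Finite-support minimax step, proved via Hahn–Banach separation. -/
lemma finMinimaxAux {J : ℕ} {U : Set (Fin J → ℝ)} (hU : IsCompact U) (hUconv : Convex ℝ U)
    (hUne : U.Nonempty) {R : Set (Fin J → ℝ)} (hR : Convex ℝ R) {c : ℝ}
    (hc : ∀ x ∈ R, ∃ u ∈ U, ∑ j, u j * x j ≤ c)
    {ι : Type} [Fintype ι] (p : ι → Fin J → ℝ) (hp : ∀ i, p i ∈ R) :
    ∃ u ∈ U, ∀ i, ∑ j, u j * p i j ≤ c := by
  classical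
  by_contra hcon
  push_neg at hcon
  -- the linear map sending u to its payoff vector
  set T : (Fin J → ℝ) →ₗ[ℝ] (ι → ℝ) :=
    { toFun := fun u i => ∑ j, u j * p i j
      map_add' := by
        intro u v; funext i
        simp [add_mul, Finset.sum_add_distrib]
      map_smul' := by
        intro a u; funext i
        simp [Finset.mul_sum, mul_assoc] } with hT
  have hTdef : ∀ u i, T u i = ∑ j, u j * p i j := fun u i => rfl
  have hTcont : Continuous T := T.continuous_of_finiteDimensional
  set C : Set (ι → ℝ) := T '' U with hCdef
  have hCcomp : IsCompact C := hU.image hTcont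
  have hCconv : Convex ℝ C := hUconv.linear_image T
  set D : Set (ι → ℝ) := {y | ∀ i, y i ≤ c} with hDdef
  have hDclosed : IsClosed D := by
    have : D = ⋂ i, {y : ι → ℝ | y i ≤ c} := by
      ext y; simp [hDdef, Set.mem_iInter]
    rw [this]
    exact isClosed_iInter fun i => isClosed_le (continuous_apply i) continuous_const
  have hDconv : Convex ℝ D := by
    have : D = ⋂ i, {y : ι → ℝ | y i ≤ c} := by
      ext y; simp [hDdef, Set.mem_iInter]
    rw [this]
    exact convex_iInter fun i =>
      convex_halfSpace_le ⟨fun a b => rfl, fun r a => rfl⟩ c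
  have hdisj : Disjoint D C := by
    rw [Set.disjoint_left]
    rintro y hyD ⟨u, huU, rfl⟩
    obtain ⟨i, hi⟩ := hcon u huU
    exact absurd (hyD i) (not_le.mpr hi)
  obtain ⟨f, a, v, hfD, hav, hfC⟩ :=
    geometric_hahn_banach_closed_compact hDconv hDclosed hCconv hCcomp hdisj
  set lam : ι → ℝ := fun i => f (fun j => if i = j then (1:ℝ) else 0) with hlam
  have hf : ∀ y : ι → ℝ, f y = ∑ i, y i * lam i := by
    intro y
    conv_lhs => rw [pi_eq_sum_univ y]
    rw [map_sum]
    simp [hlam, smul_eq_mul]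
  have hconstc : (fun _ : ι => c) ∈ D := fun i => le_refl c
  have hfc : f (fun _ => c) < a := hfD _ hconstc
  have hlamnn : ∀ i, 0 ≤ lam i := by
    intro i
    by_contra hneg
    push_neg at hneg
    set t : ℝ := (a - f (fun _ => c)) / (-lam i) with ht
    have htpos : 0 < t := div_pos (by linarith) (by linarith)
    have hyD : (fun j => if i = j then c - t else c) ∈ D := by
      intro j
      by_cases h : i = j <;> simp [h] <;> linarith
    have hval : f (fun j => if i = j then c - t else c) = f (fun _ => c) - t * lam i := by
      rw [hf, hf]
      have hsplit : ∀ i' : ι, (if i = i' then c - t else c) * lam i' =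
          c * lam i' - (if i = i' then t * lam i' else 0) := by
        intro i'; by_cases h : i = i' <;> simp [h] <;> ring
      simp only [hsplit]
      rw [Finset.sum_sub_distrib, Finset.sum_ite_eq]
      simp
    have hlt : f (fun j => if i = j then c - t else c) < a := hfD _ hyD
    rw [hval] at hlt
    have hli : -lam i ≠ 0 := by linarith
    have hcancel : t * (-lam i) = a - f (fun _ => c) := by
      rw [ht]; exact div_mul_cancel₀ _ hli
    nlinarith [hcancel]
  set L : ℝ := ∑ i, lam i with hL
  have hfconst : ∀ r : ℝ, f (fun _ => r) = r * L := by
    intro r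
    rw [hf, hL, Finset.mul_sum]
  have hLpos : 0 < L := by
    rcases lt_or_eq_of_le (Finset.sum_nonneg fun i _ => hlamnn i) with h | h
    · exact h
    · exfalso
      have hall : ∀ i, lam i = 0 := by
        intro i
        have := (Finset.sum_eq_zero_iff_of_nonneg fun j _ => hlamnn j).mp h.symm
        exact this i (Finset.mem_univ i)
      have hf0 : ∀ y : ι → ℝ, f y = 0 := by
        intro y; rw [hf]; simp [hall]
      obtain ⟨u0, hu0⟩ := hUne
      have h1 : (0:ℝ) < a := by have := hfc; rw [hf0] at this; linarith
      have h2 : v < 0 := by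
        have := hfC (T u0) ⟨u0, hu0, rfl⟩
        rw [hf0] at this; linarith
      linarith
  set xbar : Fin J → ℝ := ∑ i, (lam i / L) • p i with hxbar
  have hxbarR : xbar ∈ R := by
    apply hR.sum_mem
    · intro i _; exact div_nonneg (hlamnn i) hLpos.le
    · rw [← Finset.sum_div]; exact div_self hLpos.ne'
    · intro i _; exact hp i
  obtain ⟨u0, hu0U, hu0⟩ := hc xbar hxbarR
  have hexp : (∑ j, u0 j * xbar j) = (∑ i, lam i * T u0 i) / L := by
    have : ∀ j, xbar j = ∑ i, (lam i / L) * p i j := by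
      intro j; rw [hxbar]; simp [Finset.sum_apply]
    calc (∑ j, u0 j * xbar j) = ∑ j, ∑ i, (lam i / L) * (u0 j * p i j) := by
          refine Finset.sum_congr rfl fun j _ => ?_
          rw [this j, Finset.mul_sum]
          refine Finset.sum_congr rfl fun i _ => by ring
      _ = ∑ i, ∑ j, (lam i / L) * (u0 j * p i j) := Finset.sum_comm
      _ = ∑ i, (lam i / L) * T u0 i := by
          refine Finset.sum_congr rfl fun i _ => ?_
          rw [hTdef, Finset.mul_sum]
      _ = (∑ i, lam i * T u0 i) / L := by
          rw [Finset.sum_div]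
          refine Finset.sum_congr rfl fun i _ => by ring
  have hbig : c * L < ∑ i, lam i * T u0 i := by
    have h1 : v < f (T u0) := hfC (T u0) ⟨u0, hu0U, rfl⟩
    have h2 : f (T u0) = ∑ i, lam i * T u0 i := by
      rw [hf]; exact Finset.sum_congr rfl fun i _ => mul_comm _ _
    have h3 : c * L = f (fun _ => c) := (hfconst c).symm
    linarith
  have : c < ∑ j, u0 j * xbar j := by
    rw [hexp, lt_div_iff₀ hLpos]
    linarith
  linarith

/-- Minimax: if for every x in the convex set R there is u in the compact convex set U with
⟨u,x⟩ ≤ c, then a single u works for all x. -/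
lemma minimaxAux {J : ℕ} {U : Set (Fin J → ℝ)} (hU : IsCompact U) (hUconv : Convex ℝ U)
    (hUne : U.Nonempty) {R : Set (Fin J → ℝ)} (hR : Convex ℝ R) {c : ℝ}
    (hc : ∀ x ∈ R, ∃ u ∈ U, ∑ j, u j * x j ≤ c) :
    ∃ u ∈ U, ∀ x ∈ R, ∑ j, u j * x j ≤ c := by
  classical
  by_contra hcon
  push_neg at hcon
  set Z : ↥R → Set (Fin J → ℝ) := fun x => {u | ∑ j, u j * (x : Fin J → ℝ) j ≤ c} with hZ
  have hZc : ∀ x : ↥R, IsClosed (Z x) := by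
    intro x
    exact isClosed_le (continuous_finset_sum _ fun j _ =>
      (continuous_apply j).mul continuous_const) continuous_const
  have hsZ : (U ∩ ⋂ x : ↥R, Z x) = ∅ := by
    rw [Set.eq_empty_iff_forall_notMem]
    rintro u ⟨huU, huZ⟩
    obtain ⟨x, hxR, hx⟩ := hcon u huU
    have := Set.mem_iInter.mp huZ ⟨x, hxR⟩
    exact absurd this (not_le.mpr hx)
  obtain ⟨t, ht⟩ := hU.elim_finite_subfamily_closed Z hZc hsZ
  obtain ⟨u, huU, hu⟩ := finMinimaxAux hU hUconv hUne hR hc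
    (fun i : ↥t => ((i : ↥R) : Fin J → ℝ)) (fun i => (i : ↥R).2)
  rw [Set.eq_empty_iff_forall_notMem] at ht
  refine ht u ⟨huU, ?_⟩
  rw [Set.mem_iInter₂]
  intro x hx
  exact hu ⟨x, hx⟩

/-- Existence of a maximizer of the robust value (attained saddle value). -/
lemma existsRobustValue {J : ℕ} {U R : Set (Fin J → ℝ)} (hU : IsCompact U) (hUne : U.Nonempty)
    (hR : IsCompact R) (hRne : R.Nonempty) :
    ∃ c : ℝ, (∀ x ∈ R, ∃ u ∈ U, ∑ j, u j * x j ≤ c) ∧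
      ∃ x ∈ R, ∀ u ∈ U, c ≤ ∑ j, u j * x j := by
  classical
  obtain ⟨Cb, hCb⟩ := hU.isBounded.exists_norm_le
  set φ : (Fin J → ℝ) → ℝ := fun x => sInf ((fun u => ∑ j, u j * x j) '' U) with hφ
  have hcontx : ∀ x : Fin J → ℝ, Continuous fun u : Fin J → ℝ => ∑ j, u j * x j := fun x =>
    continuous_finset_sum _ fun j _ => (continuous_apply j).mul continuous_const
  have hmin : ∀ x : Fin J → ℝ, ∃ u ∈ U, (∑ j, u j * x j) = φ x ∧
      ∀ u' ∈ U, (∑ j, u j * x j) ≤ ∑ j, u' j * x j := by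
    intro x
    obtain ⟨u, huU, hu⟩ := hU.exists_isMinOn hUne (hcontx x).continuousOn
    refine ⟨u, huU, ?_, fun u' hu' => hu hu'⟩
    have hl : IsLeast ((fun u => ∑ j, u j * x j) '' U) (∑ j, u j * x j) :=
      ⟨Set.mem_image_of_mem _ huU, by rintro y ⟨u', hu', rfl⟩; exact hu hu'⟩
    exact hl.csInf_eq.symm
  have hφle : ∀ x u, u ∈ U → φ x ≤ ∑ j, u j * x j := by
    intro x u huU
    obtain ⟨u0, hu0U, he, hmin0⟩ := hmin x
    rw [← he]; exact hmin0 u huU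
  -- φ is Lipschitz
  have hlip : ∀ x y : Fin J → ℝ, φ x ≤ φ y + (J * Cb) * dist x y := by
    intro x y
    obtain ⟨u, huU, he, _⟩ := hmin y
    have h1 : φ x ≤ ∑ j, u j * x j := hφle x u huU
    have h2 : (∑ j, u j * x j) ≤ (∑ j, u j * y j) + (J * Cb) * dist x y := by
      have : (∑ j, u j * x j) - (∑ j, u j * y j) = ∑ j, u j * (x j - y j) := by
        rw [← Finset.sum_sub_distrib]
        exact Finset.sum_congr rfl fun j _ => by ring
      have hb : ∀ j, u j * (x j - y j) ≤ Cb * dist x y := by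
        intro j
        have h3 : |u j| ≤ Cb := (norm_le_pi_norm u j).trans (hCb u huU)
        have h4 : |x j - y j| ≤ dist x y := by
          rw [← Real.dist_eq]; exact dist_le_pi_dist x y j
        calc u j * (x j - y j) ≤ |u j * (x j - y j)| := le_abs_self _
          _ = |u j| * |x j - y j| := abs_mul _ _
          _ ≤ Cb * dist x y := by
              apply mul_le_mul h3 h4 (abs_nonneg _)
              exact (abs_nonneg _).trans h3
      have h5 : (∑ j, u j * (x j - y j)) ≤ ∑ _j : Fin J, Cb * dist x y :=
        Finset.sum_le_sum fun j _ => hb j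
      rw [Finset.sum_const, Finset.card_univ, Fintype.card_fin, nsmul_eq_mul] at h5
      have := this
      nlinarith [h5]
    linarith [he ▸ h2]
  have hφcont : Continuous φ := by
    have hK : (0:ℝ) ≤ J * Cb := by
      obtain ⟨u, huU⟩ := hUne
      have := (norm_nonneg u).trans (hCb u huU)
      positivity
    apply LipschitzWith.continuous (K := Real.toNNReal (J * Cb))
    apply LipschitzWith.of_dist_le_mul
    intro x y
    rw [Real.dist_eq, abs_sub_le_iff, Real.coe_toNNReal _ hK]
    constructor
    · have := hlip x y; linarith
    · have := hlip y x; rw [dist_comm] at this; linarith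
  obtain ⟨x0, hx0R, hx0⟩ := hR.exists_isMaxOn hRne hφcont.continuousOn
  refine ⟨φ x0, ?_, x0, hx0R, ?_⟩
  · intro x hxR
    obtain ⟨u, huU, he, _⟩ := hmin x
    refine ⟨u, huU, ?_⟩
    have h : φ x ≤ φ x0 := hx0 hxR
    rw [he]
    exact h
  · intro u huU
    exact hφle x0 u huU

theorem offline_mmu_convex_recommendation_no_benefit
    {J M K : ℕ} (B : Matrix (Fin M) (Fin J) ℝ) (b : Fin M → ℝ)
    (hne : (U0 B b).Nonempty) (hbd : Bornology.IsBounded (U0 B b))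
    (R : Set (Fin J → ℝ)) (hRne : R.Nonempty) (hRconv : Convex ℝ R)
    (hRcomp : IsCompact R)
    (Γ : ℝ) (hΓ : 0 ≤ Γ) (d : Fin K → Fin J → ℝ) :
    (⨅ s ∈ {s : Fin K → ℤ | ∀ κ, s κ = -1 ∨ s κ = 1},
        ⨆ x ∈ R, ⨅ u ∈ Utilde B b Γ d s, ((∑ j, u j * x j : ℝ) : EReal))
      = ⨆ x ∈ R, ⨅ u ∈ U0 B b, ((∑ j, u j * x j : ℝ) : EReal) := by
  classical
  -- U0 is closed, hence compact
  have hU0closed : IsClosed (U0 B b) := by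
    have : U0 B b = ⋂ m, {u : Fin J → ℝ | b m ≤ B.mulVec u m} := by
      ext u; simp [U0, Set.mem_iInter]
    rw [this]
    refine isClosed_iInter fun m => isClosed_le continuous_const ?_
    simp only [Matrix.mulVec, dotProduct]
    exact continuous_finset_sum _ fun j _ => continuous_const.mul (continuous_apply j)
  have hU0comp : IsCompact (U0 B b) := Metric.isCompact_of_isClosed_isBounded hU0closed hbd
  have hU0conv : Convex ℝ (U0 B b) := by
    intro u hu v hv a a' ha ha' haa m
    have h1 := hu m
    have h2 := hv m
    have : B.mulVec (a • u + a' • v) m = a * B.mulVec u m + a' * B.mulVec v m := by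
      rw [Matrix.mulVec_add, Matrix.mulVec_smul, Matrix.mulVec_smul]
      simp [smul_eq_mul]
    rw [this]
    have h3 : a * b m + a' * b m = b m := by rw [← add_mul, haa, one_mul]
    have h4 := mul_le_mul_of_nonneg_left h1 ha
    have h5 := mul_le_mul_of_nonneg_left h2 ha'
    linarith
  -- the robust value c, its maximizer x₀, and the minimax point u*
  obtain ⟨c, hc1, x₀, hx₀R, hx₀⟩ := existsRobustValue hU0comp hne hRcomp hRne
  obtain ⟨ustar, hustarU, hustar⟩ := minimaxAux hU0comp hU0conv hne hRconv hc1
  -- (c : EReal) is at most the right-hand side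
  have hcRHS : (c : EReal) ≤ ⨆ x ∈ R, ⨅ u ∈ U0 B b, ((∑ j, u j * x j : ℝ) : EReal) := by
    refine le_trans ?_ (le_iSup₂ (f := fun x (_ : x ∈ R) =>
      ⨅ u ∈ U0 B b, ((∑ j, u j * x j : ℝ) : EReal)) x₀ hx₀R)
    exact le_iInf₂ fun u hu => EReal.coe_le_coe_iff.mpr (hx₀ u hu)
  apply le_antisymm
  · -- pick the worst-case answers according to u*
    set s : Fin K → ℤ := fun κ => if 0 ≤ ∑ j, ustar j * d κ j then 1 else -1 with hs
    have hsS : s ∈ {s : Fin K → ℤ | ∀ κ, s κ = -1 ∨ s κ = 1} := by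
      intro κ; by_cases h : 0 ≤ ∑ j, ustar j * d κ j <;> simp [hs, h]
    have hmem : ustar ∈ Utilde B b Γ d s := by
      refine ⟨hustarU, 0, ⟨fun κ => le_refl 0, by simpa using hΓ⟩, ?_, ?_⟩
      · intro κ hκ
        by_cases h : 0 ≤ ∑ j, ustar j * d κ j
        · simpa using h
        · exfalso; rw [hs] at hκ; simp [h] at hκ
      · intro κ hκ
        by_cases h : 0 ≤ ∑ j, ustar j * d κ j
        · exfalso; rw [hs] at hκ; simp [h] at hκ
        · push_neg at h; simpa using h.le
    refine le_trans (iInf₂_le s hsS) ?_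
    refine iSup₂_le fun x hx => ?_
    refine le_trans (iInf₂_le ustar hmem) ?_
    exact le_trans (EReal.coe_le_coe_iff.mpr (hustar x hx)) hcRHS
  · refine le_iInf₂ fun s hsS => ?_
    refine iSup₂_mono fun x hx => ?_
    exact le_iInf₂ fun u hu => iInf₂_le u hu.1
end
end

section
/- Let n ∈ ℕ and let w_1,…,w_n be positive integers with Σ_{κ=1}^n w_κ = 2W. For s ∈ {−1,1}^n define U(s) := {u ∈ ℝ^{n+1} : 0 ≤ u_κ ≤ 1 for κ ≤ n, u_{n+1} = 1/2, u_κ ≥ 1/2 whenever s_κ = 1, u_κ ≤ 1/2 whenever s_κ = −1}, and let x¹ := (2w_1,…,2w_n,−2W) and x² := (−2w_1,…,−2w_n,6W) in ℝ^{n+1}. Then for every s ∈ {−1,1}^n, max( inf_{u∈U(s)} u·x¹, inf_{u∈U(s)} u·x² ) = max( Σ_{κ: s_κ=1} w_κ − W, W − Σ_{κ: s_κ=1} w_κ ) ≥ 0. Moreover, min_{s∈{−1,1}^n} max( inf_{u∈U(s)} u·x¹, inf_{u∈U(s)} u·x² ) = 0 if and only if there exists a subset X ⊆ {1,…,n} with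 Σ_{κ∈X} w_κ = W. -/
open scoped BigOperators

noncomputable section

/-- The uncertainty set `U(s)` of the Partition reduction for the max-min utility problem. -/
def Upart {n : ℕ} (s : Fin n → ℤ) : Set (Fin (n + 1) → ℝ) :=
  {u | (∀ κ : Fin n, 0 ≤ u κ.castSucc ∧ u κ.castSucc ≤ 1) ∧
    u (Fin.last n) = 1 / 2 ∧
    (∀ κ : Fin n, s κ = 1 → 1 / 2 ≤ u κ.castSucc) ∧
    (∀ κ : Fin n, s κ = -1 → u κ.castSucc ≤ 1 / 2)}

/-- The first item `x¹ = (2w₁,…,2wₙ,−2W)` of the Partition reduction. -/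
def xOne {n : ℕ} (w : Fin n → ℕ) (W : ℕ) : Fin (n + 1) → ℝ :=
  Fin.snoc (fun κ : Fin n => 2 * (w κ : ℝ)) (-2 * (W : ℝ))

/-- The second item `x² = (−2w₁,…,−2wₙ,6W)` of the Partition reduction. -/
def xTwo {n : ℕ} (w : Fin n → ℕ) (W : ℕ) : Fin (n + 1) → ℝ :=
  Fin.snoc (fun κ : Fin n => -2 * (w κ : ℝ)) (6 * (W : ℝ))

section Aux

variable {n : ℕ}

lemma sum_xOne (w : Fin n → ℕ) (W : ℕ) (u : Fin (n + 1) → ℝ)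
    (hu : u (Fin.last n) = 1 / 2) :
    ∑ j, u j * xOne w W j = (∑ κ, u κ.castSucc * (2 * (w κ : ℝ))) - W := by
  rw [Fin.sum_univ_castSucc]
  simp only [xOne, Fin.snoc_castSucc, Fin.snoc_last, hu]
  ring

lemma sum_xTwo (w : Fin n → ℕ) (W : ℕ) (u : Fin (n + 1) → ℝ)
    (hu : u (Fin.last n) = 1 / 2) :
    ∑ j, u j * xTwo w W j = 3 * W - (∑ κ, u κ.castSucc * (2 * (w κ : ℝ))) := by
  rw [Fin.sum_univ_castSucc]
  simp only [xTwo, Fin.snoc_castSucc, Fin.snoc_last, hu]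
  have h : ∀ κ : Fin n, u κ.castSucc * (-2 * (w κ : ℝ))
      = -(u κ.castSucc * (2 * (w κ : ℝ))) := fun κ => by ring
  rw [Finset.sum_congr rfl fun κ _ => h κ, Finset.sum_neg_distrib]
  ring

lemma inf_xOne (w : Fin n → ℕ) (W : ℕ) (s : Fin n → ℤ) :
    (⨅ u ∈ Upart s, ((∑ j, u j * xOne w W j : ℝ) : EReal))
      = (((∑ κ ∈ Finset.univ.filter fun κ => s κ = 1, (w κ : ℝ)) - W : ℝ) : EReal) := by
  apply le_antisymm
  · set u₀ : Fin (n + 1) → ℝ :=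
      Fin.snoc (fun κ => if s κ = 1 then (1 : ℝ) / 2 else 0) (1 / 2) with hu₀
    have hlast : u₀ (Fin.last n) = 1 / 2 := by simp [hu₀]
    have hmem : u₀ ∈ Upart s := by
      refine ⟨fun κ => ?_, hlast, fun κ h => ?_, fun κ h => ?_⟩
      · simp only [hu₀, Fin.snoc_castSucc]; split <;> norm_num
      · simp [hu₀, h]
      · have h1 : s κ ≠ 1 := by rw [h]; decide
        simp [hu₀, h1]
    refine le_trans (iInf₂_le u₀ hmem) ?_
    rw [EReal.coe_le_coe_iff, sum_xOne w W u₀ hlast]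
    apply le_of_eq
    have : ∑ κ, u₀ κ.castSucc * (2 * (w κ : ℝ))
        = ∑ κ, if s κ = 1 then (w κ : ℝ) else 0 := by
      refine Finset.sum_congr rfl fun κ _ => ?_
      simp only [hu₀, Fin.snoc_castSucc]
      split <;> ring
    rw [this, ← Finset.sum_filter]
  · refine le_iInf₂ fun u hu => ?_
    obtain ⟨hbox, hlast, hpos, hneg⟩ := hu
    rw [EReal.coe_le_coe_iff, sum_xOne w W u hlast]
    apply sub_le_sub_right
    rw [← Finset.sum_filter_add_sum_filter_not Finset.univ (fun κ => s κ = 1)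
      (fun κ => u κ.castSucc * (2 * (w κ : ℝ)))]
    have h1 : (∑ κ ∈ Finset.univ.filter fun κ => s κ = 1, (w κ : ℝ))
        ≤ ∑ κ ∈ Finset.univ.filter (fun κ => s κ = 1),
            u κ.castSucc * (2 * (w κ : ℝ)) := by
      refine Finset.sum_le_sum fun κ hκ => ?_
      have hs1 : s κ = 1 := by simpa using hκ
      have := hpos κ hs1
      nlinarith [Nat.cast_nonneg (α := ℝ) (w κ)]
    have h2 : (0 : ℝ) ≤ ∑ κ ∈ Finset.univ.filter (fun κ => ¬ s κ = 1),
        u κ.castSucc * (2 * (w κ : ℝ)) := by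
      refine Finset.sum_nonneg fun κ _ => ?_
      have := (hbox κ).1
      positivity
    linarith

lemma inf_xTwo (w : Fin n → ℕ) (W : ℕ) (hW : ∑ κ, w κ = 2 * W)
    (s : Fin n → ℤ) (hs : ∀ κ, s κ = -1 ∨ s κ = 1) :
    (⨅ u ∈ Upart s, ((∑ j, u j * xTwo w W j : ℝ) : EReal))
      = (((W : ℝ) - ∑ κ ∈ Finset.univ.filter fun κ => s κ = 1, (w κ : ℝ) : ℝ) : EReal) := by
  have hsumw : ∑ κ, (w κ : ℝ) = 2 * W := by
    have := congrArg (Nat.cast : ℕ → ℝ) hW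
    push_cast at this
    simpa using this
  apply le_antisymm
  · set u₀ : Fin (n + 1) → ℝ :=
      Fin.snoc (fun κ => if s κ = 1 then (1 : ℝ) else 1 / 2) (1 / 2) with hu₀
    have hlast : u₀ (Fin.last n) = 1 / 2 := by simp [hu₀]
    have hmem : u₀ ∈ Upart s := by
      refine ⟨fun κ => ?_, hlast, fun κ h => ?_, fun κ h => ?_⟩
      · simp only [hu₀, Fin.snoc_castSucc]; split <;> norm_num
      · simp only [hu₀, Fin.snoc_castSucc, if_pos h]; norm_num
      · have h1 : s κ ≠ 1 := by rw [h]; decide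
        simp [hu₀, h1]
    refine le_trans (iInf₂_le u₀ hmem) ?_
    rw [EReal.coe_le_coe_iff, sum_xTwo w W u₀ hlast]
    apply le_of_eq
    have : ∑ κ, u₀ κ.castSucc * (2 * (w κ : ℝ))
        = (∑ κ, if s κ = 1 then (w κ : ℝ) else 0) + ∑ κ, (w κ : ℝ) := by
      rw [← Finset.sum_add_distrib]
      refine Finset.sum_congr rfl fun κ _ => ?_
      simp only [hu₀, Fin.snoc_castSucc]
      split <;> ring
    rw [this, ← Finset.sum_filter, hsumw]
    ring
  · refine le_iInf₂ fun u hu => ?_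
    obtain ⟨hbox, hlast, hpos, hneg⟩ := hu
    rw [EReal.coe_le_coe_iff, sum_xTwo w W u hlast]
    have key : ∑ κ, u κ.castSucc * (2 * (w κ : ℝ))
        ≤ (∑ κ, if s κ = 1 then (w κ : ℝ) else 0) + ∑ κ, (w κ : ℝ) := by
      rw [← Finset.sum_add_distrib]
      refine Finset.sum_le_sum fun κ _ => ?_
      by_cases h : s κ = 1
      · have := (hbox κ).2
        simp only [h, if_pos]
        nlinarith [Nat.cast_nonneg (α := ℝ) (w κ)]
      · have hm : s κ = -1 := (hs κ).resolve_right h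
        have := hneg κ hm
        simp only [h, if_neg, not_false_iff]
        nlinarith [Nat.cast_nonneg (α := ℝ) (w κ)]
    rw [← Finset.sum_filter] at key
    rw [hsumw] at key
    linarith

end Aux

theorem offline_mmu_partition_reduction
    {n : ℕ} (w : Fin n → ℕ) (hw : ∀ κ, 0 < w κ) (W : ℕ)
    (hW : ∑ κ, w κ = 2 * W) :
    (∀ s : Fin n → ℤ, (∀ κ, s κ = -1 ∨ s κ = 1) →
        max
          (⨅ u ∈ Upart s, ((∑ j, u j * xOne w W j : ℝ) : EReal))
          (⨅ u ∈ Upart s, ((∑ j, u j * xTwo w W j : ℝ) : EReal))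
        = ((max ((∑ κ ∈ Finset.univ.filter fun κ => s κ = 1, (w κ : ℝ)) - W)
              ((W : ℝ) - ∑ κ ∈ Finset.univ.filter fun κ => s κ = 1, (w κ : ℝ)) : ℝ) : EReal) ∧
        (0 : EReal) ≤
          max
            (⨅ u ∈ Upart s, ((∑ j, u j * xOne w W j : ℝ) : EReal))
            (⨅ u ∈ Upart s, ((∑ j, u j * xTwo w W j : ℝ) : EReal))) ∧
      ((⨅ s ∈ {s : Fin n → ℤ | ∀ κ, s κ = -1 ∨ s κ = 1},
          max
            (⨅ u ∈ Upart s, ((∑ j, u j * xOne w W j : ℝ) : EReal))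
            (⨅ u ∈ Upart s, ((∑ j, u j * xTwo w W j : ℝ) : EReal)))
        = (0 : EReal)
       ↔ ∃ X : Finset (Fin n), ∑ κ ∈ X, w κ = W) := by
  have coe_max : ∀ a b : ℝ, ((max a b : ℝ) : EReal) = max (a : EReal) (b : EReal) := by
    intro a b
    rcases le_total a b with h | h
    · rw [max_eq_right h, max_eq_right (EReal.coe_le_coe_iff.mpr h)]
    · rw [max_eq_left h, max_eq_left (EReal.coe_le_coe_iff.mpr h)]
  have key : ∀ s : Fin n → ℤ, (∀ κ, s κ = -1 ∨ s κ = 1) →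
      max
        (⨅ u ∈ Upart s, ((∑ j, u j * xOne w W j : ℝ) : EReal))
        (⨅ u ∈ Upart s, ((∑ j, u j * xTwo w W j : ℝ) : EReal))
      = ((max ((∑ κ ∈ Finset.univ.filter fun κ => s κ = 1, (w κ : ℝ)) - W)
            ((W : ℝ) - ∑ κ ∈ Finset.univ.filter fun κ => s κ = 1, (w κ : ℝ)) : ℝ) : EReal) := by
    intro s hs
    rw [inf_xOne w W s, inf_xTwo w W hW s hs, coe_max]
  have nonneg : ∀ s : Fin n → ℤ,
      (0 : ℝ) ≤ max ((∑ κ ∈ Finset.univ.filter fun κ => s κ = 1, (w κ : ℝ)) - W)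
        ((W : ℝ) - ∑ κ ∈ Finset.univ.filter fun κ => s κ = 1, (w κ : ℝ)) := by
    intro s
    rcases le_total ((∑ κ ∈ Finset.univ.filter fun κ => s κ = 1, (w κ : ℝ))) (W : ℝ) with h | h
    · exact le_max_of_le_right (by linarith)
    · exact le_max_of_le_left (by linarith)
  refine ⟨fun s hs => ⟨key s hs, ?_⟩, ?_⟩
  · rw [key s hs]
    exact_mod_cast EReal.coe_nonneg.mpr (nonneg s)
  constructor
  · intro hinf
    by_contra hX
    push_neg at hX
    have hone : (1 : EReal) ≤ ⨅ s ∈ {s : Fin n → ℤ | ∀ κ, s κ = -1 ∨ s κ = 1},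
        max
          (⨅ u ∈ Upart s, ((∑ j, u j * xOne w W j : ℝ) : EReal))
          (⨅ u ∈ Upart s, ((∑ j, u j * xTwo w W j : ℝ) : EReal)) := by
      refine le_iInf₂ fun s hs => ?_
      rw [key s hs]
      have hA : (∑ κ ∈ Finset.univ.filter fun κ => s κ = 1, (w κ : ℝ))
          = ((∑ κ ∈ Finset.univ.filter fun κ => s κ = 1, w κ : ℕ) : ℝ) := by
        push_cast; ring
      set N := ∑ κ ∈ Finset.univ.filter fun κ => s κ = 1, w κ with hN
      have hNne : N ≠ W := fun h => hX _ h
      have h1 : (1 : ℝ) ≤ max (((N : ℝ)) - W) ((W : ℝ) - (N : ℝ)) := by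
        rcases lt_or_gt_of_ne hNne with h | h
        · have : N + 1 ≤ W := h
          have : (N : ℝ) + 1 ≤ (W : ℝ) := by exact_mod_cast this
          exact le_max_of_le_right (by linarith)
        · have : W + 1 ≤ N := h
          have : (W : ℝ) + 1 ≤ (N : ℝ) := by exact_mod_cast this
          exact le_max_of_le_left (by linarith)
      rw [hA]
      exact_mod_cast EReal.coe_le_coe_iff.mpr h1
    rw [hinf] at hone
    exact absurd hone (by norm_num)
  · rintro ⟨X, hXsum⟩
    set s₀ : Fin n → ℤ := fun κ => if κ ∈ X then 1 else -1 with hs₀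
    have hvalid : ∀ κ, s₀ κ = -1 ∨ s₀ κ = 1 := by
      intro κ; by_cases h : κ ∈ X <;> simp [hs₀, h]
    have hfilter : (Finset.univ.filter fun κ => s₀ κ = 1) = X := by
      ext κ
      by_cases h : κ ∈ X <;> simp [hs₀, h]
    have hAval : (∑ κ ∈ Finset.univ.filter fun κ => s₀ κ = 1, (w κ : ℝ)) = (W : ℝ) := by
      rw [hfilter, ← hXsum]; push_cast; ring
    apply le_antisymm
    · refine le_trans (iInf₂_le s₀ hvalid) ?_
      rw [key s₀ hvalid, hAval]
      simp
    · refine le_iInf₂ fun s hs => ?_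
      rw [key s hs]
      exact_mod_cast EReal.coe_nonneg.mpr (nonneg s)
end
end

section
/- Suppose U⁰ is nonempty, bounded, and has nonempty interior, and let Γ ≥ 0 and R ⊆ ℝ^J be nonempty. Then for every choice of difference vectors d_1,…,d_K ∈ ℝ^J: ⨆_{s∈{−1,0,1}^K : U_Γ(d,s) ≠ ∅} ⨅_{x∈R} ⨆_{u∈U_Γ(d,s)} ⨆_{x'∈R} (u·x' − u·x) = ⨆_{s∈{−1,1}^K} ⨅_{x∈R} ⨆_{u∈Ũ_Γ(d,s)} ⨆_{x'∈R} (u·x' − u·x). Consequently, the offline min-max regret elicitation problem with strict uncertainty sets and adversary restricted to compatible responses, and its variant with closed uncertainty sets and responses restricted to {−1,1}^K, have the same optimal value and the same sets of optimal queries. -/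
open scoped BigOperators

noncomputable section

/-! ### Auxiliary real-arithmetic lemmas -/

lemma max0_nonneg (x : ℝ) : 0 ≤ max 0 x := le_max_left _ _
lemma le_max0 (x : ℝ) : x ≤ max 0 x := le_max_right _ _

lemma max0_combo (a c x y : ℝ) (ha : 0 ≤ a) (hc : 0 ≤ c) :
    max 0 (a * x + c * y) ≤ a * max 0 x + c * max 0 y :=
  max_le (by positivity)
    (add_le_add (mul_le_mul_of_nonneg_left (le_max0 x) ha)
      (mul_le_mul_of_nonneg_left (le_max0 y) hc))

lemma max0_add (x y : ℝ) : max 0 (x + y) ≤ max 0 x + max 0 y := by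
  have := max0_combo 1 1 x y zero_le_one zero_le_one
  simpa using this

lemma max0_sum_le {α : Type*} (t : Finset α) (f : α → ℝ) :
    max 0 (∑ i ∈ t, f i) ≤ ∑ i ∈ t, max 0 (f i) :=
  max_le (Finset.sum_nonneg fun _ _ => max0_nonneg _)
    (Finset.sum_le_sum fun _ _ => le_max0 _)

lemma max0_mul (c x : ℝ) (hc : 0 ≤ c) : max 0 (c * x) = c * max 0 x := by
  rcases le_or_gt x 0 with h | h
  · rw [max_eq_left (by nlinarith), max_eq_left h, mul_zero]
  · rw [max_eq_right (by nlinarith), max_eq_right h.le]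

lemma max0_mid_lt (x y : ℝ) (hx : 0 < x) (hy : y < 0) :
    max 0 ((1:ℝ)/2 * x + 1/2 * y) < 1/2 * max 0 x + 1/2 * max 0 y := by
  rw [max_eq_right hx.le, max_eq_left hy.le]
  rcases le_or_gt ((1:ℝ)/2 * x + 1/2 * y) 0 with h | h
  · rw [max_eq_left h]; nlinarith
  · rw [max_eq_right h.le]; nlinarith

lemma dot_combo {J : ℕ} (a c : ℝ) (v w x : Fin J → ℝ) :
    (∑ j, (a * v j + c * w j) * x j) = a * ∑ j, v j * x j + c * ∑ j, w j * x j := by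
  simp [add_mul, Finset.sum_add_distrib, Finset.mul_sum, mul_assoc]

lemma dot_avg {J K : ℕ} (c : ℝ) (v : Fin J → ℝ) (f : Fin K → Fin J → ℝ) (x : Fin J → ℝ) :
    (∑ j, (c * (v j + ∑ κ, f κ j)) * x j)
      = c * ((∑ j, v j * x j) + ∑ κ, ∑ j, f κ j * x j) := by
  have step : ∀ j, (c * (v j + ∑ κ, f κ j)) * x j
      = c * (v j * x j) + ∑ κ, c * (f κ j * x j) := by
    intro j
    rw [mul_assoc, add_mul, Finset.sum_mul, mul_add, Finset.mul_sum]
  rw [Finset.sum_congr rfl fun j _ => step j, Finset.sum_add_distrib, Finset.sum_comm]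
  rw [mul_add, Finset.mul_sum, Finset.mul_sum]
  exact congrArg₂ (· + ·) rfl
    (Finset.sum_congr rfl fun κ _ =>
      (Finset.mul_sum Finset.univ (fun j => f κ j * x j) c).symm)

lemma dot_comm {J : ℕ} (v x : Fin J → ℝ) : (∑ j, v j * x j) = ∑ j, x j * v j := by
  simp [mul_comm]

/-! ### `U0` convexity facts -/

lemma mulVec_eq_dot {J M : ℕ} (B : Matrix (Fin M) (Fin J) ℝ) (u : Fin J → ℝ) (m : Fin M) :
    B.mulVec u m = ∑ j, u j * B m j := by
  simp [Matrix.mulVec, dotProduct, mul_comm]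

lemma U0_combo {J M : ℕ} {B : Matrix (Fin M) (Fin J) ℝ} {b : Fin M → ℝ}
    {u v : Fin J → ℝ} (hu : u ∈ U0 B b) (hv : v ∈ U0 B b)
    {a c : ℝ} (ha : 0 ≤ a) (hc : 0 ≤ c) (hac : a + c = 1) :
    (fun j => a * u j + c * v j) ∈ U0 B b := by
  intro m
  have h1 := hu m
  have h2 := hv m
  rw [mulVec_eq_dot] at h1 h2 ⊢
  rw [dot_combo]
  have hb : a * b m + c * b m = b m := by rw [← add_mul, hac, one_mul]
  nlinarith [mul_le_mul_of_nonneg_left h1 ha, mul_le_mul_of_nonneg_left h2 hc]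

lemma U0_avg {J M K : ℕ} {B : Matrix (Fin M) (Fin J) ℝ} {b : Fin M → ℝ}
    {v : Fin J → ℝ} (hv : v ∈ U0 B b) {f : Fin K → Fin J → ℝ}
    (hf : ∀ κ, f κ ∈ U0 B b) :
    (fun j => ((K : ℝ) + 1)⁻¹ * (v j + ∑ κ, f κ j)) ∈ U0 B b := by
  intro m
  have hKpos : (0:ℝ) < (K : ℝ) + 1 := by positivity
  rw [mulVec_eq_dot, dot_avg]
  have h1 : b m ≤ ∑ j, v j * B m j := by rw [← mulVec_eq_dot]; exact hv m
  have h2 : (K : ℝ) * b m ≤ ∑ κ, ∑ j, f κ j * B m j := by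
    calc (K : ℝ) * b m = ∑ _κ : Fin K, b m := by
          rw [Finset.sum_const, Finset.card_univ, Fintype.card_fin, nsmul_eq_mul]
      _ ≤ ∑ κ, ∑ j, f κ j * B m j :=
          Finset.sum_le_sum fun κ _ => by rw [← mulVec_eq_dot]; exact hf κ m
  have : ((K : ℝ) + 1) * b m ≤ (∑ j, v j * B m j) + ∑ κ, ∑ j, f κ j * B m j := by
    nlinarith
  calc b m = ((K : ℝ) + 1)⁻¹ * (((K : ℝ) + 1) * b m) := by
        field_simp
    _ ≤ ((K : ℝ) + 1)⁻¹ * ((∑ j, v j * B m j) + ∑ κ, ∑ j, f κ j * B m j) :=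
        mul_le_mul_of_nonneg_left this (by positivity)

/-! ### The penalty function `G` -/

/-- signed dot product with the difference vectors -/
def qq {J K : ℕ} (d : Fin K → Fin J → ℝ) (s : Fin K → ℤ) (u : Fin J → ℝ) (κ : Fin K) : ℝ :=
  (s κ : ℝ) * ∑ j, u j * d κ j

/-- total inconsistency -/
def GG {J K : ℕ} (d : Fin K → Fin J → ℝ) (s : Fin K → ℤ) (u : Fin J → ℝ) : ℝ :=
  ∑ κ, max 0 (- qq d s u κ)

lemma qq_combo {J K : ℕ} (d : Fin K → Fin J → ℝ) (s : Fin K → ℤ)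
    (a c : ℝ) (u v : Fin J → ℝ) (κ : Fin K) :
    qq d s (fun j => a * u j + c * v j) κ = a * qq d s u κ + c * qq d s v κ := by
  unfold qq
  rw [dot_combo]
  ring

lemma GG_combo {J K : ℕ} (d : Fin K → Fin J → ℝ) (s : Fin K → ℤ)
    {a c : ℝ} (u v : Fin J → ℝ) (ha : 0 ≤ a) (hc : 0 ≤ c) :
    GG d s (fun j => a * u j + c * v j) ≤ a * GG d s u + c * GG d s v := by
  unfold GG
  rw [Finset.mul_sum, Finset.mul_sum, ← Finset.sum_add_distrib]
  refine Finset.sum_le_sum fun κ _ => ?_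
  rw [qq_combo]
  have : -(a * qq d s u κ + c * qq d s v κ) = a * (-qq d s u κ) + c * (-qq d s v κ) := by ring
  rw [this]
  exact max0_combo _ _ _ _ ha hc

lemma GG_nonneg {J K : ℕ} (d : Fin K → Fin J → ℝ) (s : Fin K → ℤ) (u : Fin J → ℝ) :
    0 ≤ GG d s u :=
  Finset.sum_nonneg fun _ _ => max0_nonneg _

/-- membership in the closed set is equivalent to `G u ≤ Γ` (for `s ∈ {±1}^K`). -/
lemma tilde_mem_iff {J M K : ℕ} (B : Matrix (Fin M) (Fin J) ℝ) (b : Fin M → ℝ)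
    (Γ : ℝ) (d : Fin K → Fin J → ℝ) {s : Fin K → ℤ}
    (hs : ∀ κ, s κ = -1 ∨ s κ = 1) (u : Fin J → ℝ) :
    u ∈ Utilde B b Γ d s ↔ u ∈ U0 B b ∧ GG d s u ≤ Γ := by
  constructor
  · rintro ⟨hu0, ε, ⟨hεnn, hεsum⟩, h1, hm1⟩
    refine ⟨hu0, le_trans ?_ hεsum⟩
    refine Finset.sum_le_sum fun κ _ => ?_
    rcases hs κ with h | h
    · refine max_le (hεnn κ) ?_
      have := hm1 κ h
      simp only [qq, h]
      push_cast
      linarith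
    · refine max_le (hεnn κ) ?_
      have := h1 κ h
      simp only [qq, h]
      push_cast
      linarith
  · rintro ⟨hu0, hG⟩
    refine ⟨hu0, fun κ => max 0 (- qq d s u κ), ⟨fun κ => max0_nonneg _, hG⟩, ?_, ?_⟩
    · intro κ h
      have h1 : -(∑ j, u j * d κ j) ≤ max 0 (- qq d s u κ) := by
        simp only [qq, h]
        push_cast
        simpa using le_max0 (-(1 * ∑ j, u j * d κ j))
      linarith
    · intro κ h
      have h1 : (∑ j, u j * d κ j) ≤ max 0 (- qq d s u κ) := by
        simp only [qq, h]
        push_cast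
        simpa using le_max0 (-(-1 * ∑ j, u j * d κ j))
      linarith

/-- if `G u < Γ` strictly then `u` is in the strict set (for `s ∈ {±1}^K`). -/
lemma strict_of_lt {J M K : ℕ} (B : Matrix (Fin M) (Fin J) ℝ) (b : Fin M → ℝ)
    (Γ : ℝ) (d : Fin K → Fin J → ℝ) {s : Fin K → ℤ}
    (hs : ∀ κ, s κ = -1 ∨ s κ = 1) {u : Fin J → ℝ}
    (hu0 : u ∈ U0 B b) (hG : GG d s u < Γ) :
    u ∈ Ustrict B b Γ d s := by
  have hKpos : (0:ℝ) < (K : ℝ) + 1 := by positivity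
  set δ : ℝ := (Γ - GG d s u) / ((K : ℝ) + 1) with hδdef
  have hδpos : 0 < δ := by
    apply div_pos <;> [linarith ; exact hKpos]
  refine ⟨hu0, fun κ => max 0 (- qq d s u κ) + δ, ⟨fun κ => by positivity, ?_⟩, ?_, ?_, ?_⟩
  · show (∑ κ, (max 0 (- qq d s u κ) + δ)) ≤ Γ
    rw [Finset.sum_add_distrib, Finset.sum_const, Finset.card_univ, Fintype.card_fin,
      nsmul_eq_mul]
    have h3 : (K : ℝ) * δ ≤ ((K : ℝ) + 1) * δ := by nlinarith
    have h2 : ((K : ℝ) + 1) * δ = Γ - GG d s u := by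
      rw [hδdef]; field_simp
    have hGGdef : GG d s u = ∑ κ, max 0 (- qq d s u κ) := rfl
    linarith
  · intro κ h
    show -(max 0 (- qq d s u κ) + δ) < ∑ j, u j * d κ j
    have h1 : -(∑ j, u j * d κ j) ≤ max 0 (- qq d s u κ) := by
      simp only [qq, h]
      push_cast
      simpa using le_max0 (-(1 * ∑ j, u j * d κ j))
    linarith
  · intro κ h
    rcases hs κ with h' | h' <;> omega
  · intro κ h
    show (∑ j, u j * d κ j) < max 0 (- qq d s u κ) + δ
    have h1 : (∑ j, u j * d κ j) ≤ max 0 (- qq d s u κ) := by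
      simp only [qq, h]
      push_cast
      simpa using le_max0 (-(-1 * ∑ j, u j * d κ j))
    linarith

/-- the key sign-rigidity lemma in the degenerate case. -/
lemma midkey {J M K : ℕ} (B : Matrix (Fin M) (Fin J) ℝ) (b : Fin M → ℝ)
    (Γ : ℝ) (d : Fin K → Fin J → ℝ) {s : Fin K → ℤ}
    (hs : ∀ κ, s κ = -1 ∨ s κ = 1)
    (hcase : ∀ u ∈ U0 B b, Γ ≤ GG d s u)
    {u v : Fin J → ℝ} (hu : u ∈ Utilde B b Γ d s) (hv : v ∈ Utilde B b Γ d s)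
    {κ : Fin K} (hqv : 0 < qq d s v κ) : 0 ≤ qq d s u κ := by
  by_contra hneg
  push_neg at hneg
  obtain ⟨hu0, huG⟩ := (tilde_mem_iff B b Γ d hs u).1 hu
  obtain ⟨hv0, hvG⟩ := (tilde_mem_iff B b Γ d hs v).1 hv
  set m : Fin J → ℝ := fun j => (1:ℝ)/2 * u j + (1:ℝ)/2 * v j with hm
  have hm0 : m ∈ U0 B b := U0_combo hu0 hv0 (by norm_num) (by norm_num) (by norm_num)
  have hdown : GG d s m < (1:ℝ)/2 * GG d s u + (1:ℝ)/2 * GG d s v := by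
    unfold GG
    rw [Finset.mul_sum, Finset.mul_sum, ← Finset.sum_add_distrib]
    refine Finset.sum_lt_sum (fun κ' _ => ?_) ⟨κ, Finset.mem_univ κ, ?_⟩
    · rw [qq_combo]
      have : -((1:ℝ)/2 * qq d s u κ' + 1/2 * qq d s v κ')
          = (1:ℝ)/2 * (-qq d s u κ') + 1/2 * (-qq d s v κ') := by ring
      rw [this]
      exact max0_combo _ _ _ _ (by norm_num) (by norm_num)
    · rw [qq_combo]
      have : -((1:ℝ)/2 * qq d s u κ + 1/2 * qq d s v κ)
          = (1:ℝ)/2 * (-qq d s u κ) + 1/2 * (-qq d s v κ) := by ring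
      rw [this]
      exact max0_mid_lt _ _ (by linarith) (by linarith)
  have := hcase m hm0
  nlinarith

/-! ### The core approximation lemma -/

lemma core {J M K : ℕ} (B : Matrix (Fin M) (Fin J) ℝ) (b : Fin M → ℝ)
    (Γ : ℝ) (hΓ : 0 ≤ Γ) (d : Fin K → Fin J → ℝ) (s : Fin K → ℤ)
    (hs : ∀ κ, s κ = -1 ∨ s κ = 1) (hne : (Utilde B b Γ d s).Nonempty) :
    ∃ (s' : Fin K → ℤ) (u₀ : Fin J → ℝ),
      (∀ κ, s' κ = -1 ∨ s' κ = 0 ∨ s' κ = 1) ∧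
      ∀ v ∈ Utilde B b Γ d s, ∀ t : ℝ, 0 < t → t ≤ 1 →
        (fun j => (1 - t) * v j + t * u₀ j) ∈ Ustrict B b Γ d s' := by
  classical
  obtain ⟨v₁, hv₁⟩ := hne
  by_cases hcase : ∃ u ∈ U0 B b, GG d s u < Γ
  · -- nondegenerate case : s' = s
    obtain ⟨u₀, hu₀0, hu₀G⟩ := hcase
    refine ⟨s, u₀, fun κ => (hs κ).imp id Or.inr, ?_⟩
    intro v hv t ht ht1
    obtain ⟨hv0, hvG⟩ := (tilde_mem_iff B b Γ d hs v).1 hv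
    refine strict_of_lt B b Γ d hs
      (U0_combo hv0 hu₀0 (by linarith) ht.le (by ring)) ?_
    have hc := GG_combo d s v u₀ (a := 1 - t) (c := t) (by linarith) ht.le
    nlinarith
  · -- degenerate case
    push_neg at hcase
    set Z : Fin K → Prop := fun κ => ∀ u ∈ Utilde B b Γ d s, qq d s u κ ≤ 0 with hZ
    have hch : ∀ κ, ∃ u, u ∈ Utilde B b Γ d s ∧ (¬ Z κ → 0 < qq d s u κ) := by
      intro κ
      by_cases h : Z κ
      · exact ⟨v₁, hv₁, fun hc => absurd h hc⟩
      · have h' : ∃ u, u ∈ Utilde B b Γ d s ∧ 0 < qq d s u κ := by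
          by_contra hno
          push_neg at hno
          exact h fun u hu => hno u hu
        obtain ⟨u, hu, hq⟩ := h'
        exact ⟨u, hu, fun _ => hq⟩
    choose f hf hfq using hch
    set u₀ : Fin J → ℝ := fun j => ((K : ℝ) + 1)⁻¹ * (v₁ j + ∑ κ, f κ j) with hu₀def
    set s' : Fin K → ℤ := fun κ => if Z κ then 0 else s κ with hs'def
    have hKpos : (0:ℝ) < (K : ℝ) + 1 := by positivity
    have hv₁' := (tilde_mem_iff B b Γ d hs v₁).1 hv₁
    have hf' : ∀ κ, f κ ∈ U0 B b ∧ GG d s (f κ) ≤ Γ :=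
      fun κ => (tilde_mem_iff B b Γ d hs (f κ)).1 (hf κ)
    -- linearity of qq at u₀
    have hqq_avg : ∀ κ', qq d s u₀ κ'
        = ((K : ℝ) + 1)⁻¹ * (qq d s v₁ κ' + ∑ κ, qq d s (f κ) κ') := by
      intro κ'
      unfold qq
      rw [hu₀def]
      rw [dot_avg ((K : ℝ) + 1)⁻¹ v₁ f (d κ')]
      rw [← Finset.mul_sum Finset.univ (fun κ => ∑ j, f κ j * d κ' j) ((s κ' : ℝ))]
      ring
    -- u₀ ∈ U0
    have hu₀0 : u₀ ∈ U0 B b := U0_avg hv₁'.1 fun κ => (hf' κ).1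
    -- GG u₀ ≤ Γ
    have hGGu₀ : GG d s u₀ ≤ Γ := by
      have h1 : GG d s u₀
          ≤ ((K : ℝ) + 1)⁻¹ * (GG d s v₁ + ∑ κ, GG d s (f κ)) := by
        unfold GG
        calc (∑ κ', max 0 (- qq d s u₀ κ'))
            ≤ ∑ κ', ((K : ℝ) + 1)⁻¹
                * (max 0 (- qq d s v₁ κ') + ∑ κ, max 0 (- qq d s (f κ) κ')) := by
              refine Finset.sum_le_sum fun κ' _ => ?_
              rw [hqq_avg κ']
              have heq : -(((K : ℝ) + 1)⁻¹ * (qq d s v₁ κ' + ∑ κ, qq d s (f κ) κ'))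
                  = ((K : ℝ) + 1)⁻¹ * ((- qq d s v₁ κ') + ∑ κ, (- qq d s (f κ) κ')) := by
                rw [Finset.sum_neg_distrib]; ring
              rw [heq, max0_mul _ _ (by positivity)]
              refine mul_le_mul_of_nonneg_left ?_ (by positivity)
              refine le_trans (max0_add _ _) (add_le_add le_rfl (max0_sum_le _ _))
          _ = ((K : ℝ) + 1)⁻¹
                * ((∑ κ', max 0 (- qq d s v₁ κ'))
                  + ∑ κ, ∑ κ', max 0 (- qq d s (f κ) κ')) := by
              rw [← Finset.mul_sum]
              congr 1
              rw [Finset.sum_add_distrib, Finset.sum_comm]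
      have h2 : GG d s v₁ + ∑ κ, GG d s (f κ) ≤ ((K : ℝ) + 1) * Γ := by
        have h3 : ∑ κ, GG d s (f κ) ≤ (K : ℝ) * Γ := by
          calc ∑ κ, GG d s (f κ) ≤ ∑ _κ : Fin K, Γ :=
                Finset.sum_le_sum fun κ _ => (hf' κ).2
            _ = (K : ℝ) * Γ := by
                rw [Finset.sum_const, Finset.card_univ, Fintype.card_fin, nsmul_eq_mul]
        nlinarith [hv₁'.2]
      calc GG d s u₀ ≤ ((K : ℝ) + 1)⁻¹ * (GG d s v₁ + ∑ κ, GG d s (f κ)) := h1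
        _ ≤ ((K : ℝ) + 1)⁻¹ * (((K : ℝ) + 1) * Γ) :=
            mul_le_mul_of_nonneg_left h2 (by positivity)
        _ = Γ := by field_simp
    -- sign facts for u₀
    have hpos : ∀ κ, ¬ Z κ → 0 < qq d s u₀ κ := by
      intro κ hκ
      rw [hqq_avg κ]
      have hterm : ∀ ι : Fin K, 0 ≤ qq d s (f ι) κ := fun ι =>
        midkey B b Γ d hs hcase (hf ι) (hf κ) (hfq κ hκ)
      have hv₁pos : 0 ≤ qq d s v₁ κ := midkey B b Γ d hs hcase hv₁ (hf κ) (hfq κ hκ)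
      have hsum : 0 < ∑ ι, qq d s (f ι) κ :=
        Finset.sum_pos' (fun ι _ => hterm ι) ⟨κ, Finset.mem_univ κ, hfq κ hκ⟩
      positivity
    have hneg : ∀ κ, Z κ → qq d s u₀ κ ≤ 0 := by
      intro κ hκ
      rw [hqq_avg κ]
      have hsum : (qq d s v₁ κ + ∑ ι, qq d s (f ι) κ) ≤ 0 := by
        have h1 := hκ v₁ hv₁
        have h2 : ∑ ι, qq d s (f ι) κ ≤ 0 :=
          Finset.sum_nonpos fun ι _ => hκ (f ι) (hf ι)
        linarith
      exact mul_nonpos_of_nonneg_of_nonpos (by positivity) hsum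
    refine ⟨s', u₀, fun κ => ?_, ?_⟩
    · by_cases h : Z κ
      · refine Or.inr (Or.inl ?_)
        simp only [hs'def]
        rw [if_pos h]
      · rcases hs κ with h' | h'
        · exact Or.inl (by simp only [hs'def]; rw [if_neg h]; exact h')
        · exact Or.inr (Or.inr (by simp only [hs'def]; rw [if_neg h]; exact h'))
    intro v hv t ht ht1
    obtain ⟨hv0, hvG⟩ := (tilde_mem_iff B b Γ d hs v).1 hv
    set w : Fin J → ℝ := fun j => (1 - t) * v j + t * u₀ j with hwdef
    have hw0 : w ∈ U0 B b := U0_combo hv0 hu₀0 (by linarith) ht.le (by ring)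
    have hqw : ∀ κ, qq d s w κ = (1 - t) * qq d s v κ + t * qq d s u₀ κ :=
      fun κ => qq_combo d s (1 - t) t v u₀ κ
    have hGw : GG d s w ≤ Γ := by
      have hc := GG_combo d s v u₀ (a := 1 - t) (c := t) (by linarith) ht.le
      nlinarith
    have hqwpos : ∀ κ, ¬ Z κ → 0 < qq d s w κ := by
      intro κ hκ
      rw [hqw κ]
      have h1 : 0 ≤ qq d s v κ := midkey B b Γ d hs hcase hv (hf κ) (hfq κ hκ)
      have h2 := hpos κ hκ
      nlinarith
    have hqwneg : ∀ κ, Z κ → qq d s w κ ≤ 0 := by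
      intro κ hκ
      rw [hqw κ]
      have h1 := hκ v hv
      have h2 := hneg κ hκ
      nlinarith
    refine ⟨hw0, fun κ => if Z κ then - qq d s w κ else 0, ⟨?_, ?_⟩, ?_, ?_, ?_⟩
    · intro κ
      by_cases h : Z κ
      · simp only [if_pos h]
        linarith [hqwneg κ h]
      · simp [h]
    · calc (∑ κ, if Z κ then - qq d s w κ else 0) ≤ ∑ κ, max 0 (- qq d s w κ) := by
            refine Finset.sum_le_sum fun κ _ => ?_
            by_cases h : Z κ
            · simp only [if_pos h]; exact le_max0 _
            · simp only [if_neg h]; exact max0_nonneg _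
        _ ≤ Γ := hGw
    · -- s' κ = 1
      intro κ h
      have h' : (if Z κ then (0:ℤ) else s κ) = 1 := h
      by_cases hZκ : Z κ
      · rw [if_pos hZκ] at h'
        exact absurd h' (by norm_num)
      · rw [if_neg hZκ] at h'
        show -(if Z κ then - qq d s w κ else 0) < ∑ j, w j * d κ j
        rw [if_neg hZκ]
        have hq := hqwpos κ hZκ
        simp only [qq, h'] at hq
        push_cast at hq
        linarith
    · -- s' κ = 0
      intro κ h
      have h' : (if Z κ then (0:ℤ) else s κ) = 0 := h
      have hZκ : Z κ := by
        by_contra hnZ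
        rw [if_neg hnZ] at h'
        rcases hs κ with h'' | h'' <;> omega
      show |∑ j, w j * d κ j| ≤ (if Z κ then - qq d s w κ else 0)
      rw [if_pos hZκ]
      have hq0 := hqwneg κ hZκ
      rcases hs κ with h'' | h''
      · have hqq : qq d s w κ = -(∑ j, w j * d κ j) := by
          simp [qq, h'']
        rw [hqq] at hq0 ⊢
        rw [neg_neg, abs_of_nonneg (by linarith)]
      · have hqq : qq d s w κ = ∑ j, w j * d κ j := by
          simp [qq, h'']
        rw [hqq] at hq0 ⊢
        rw [abs_of_nonpos hq0]
    · -- s' κ = -1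
      intro κ h
      have h' : (if Z κ then (0:ℤ) else s κ) = -1 := h
      by_cases hZκ : Z κ
      · rw [if_pos hZκ] at h'
        exact absurd h' (by norm_num)
      · rw [if_neg hZκ] at h'
        show (∑ j, w j * d κ j) < (if Z κ then - qq d s w κ else 0)
        rw [if_neg hZκ]
        have hq := hqwpos κ hZκ
        simp only [qq, h'] at hq
        push_cast at hq
        linarith

/-! ### EReal limit lemma -/

open Filter in
lemma limit_lemma {J : ℕ} (A : Set (Fin J → ℝ)) (R : Set (Fin J → ℝ))
    (x x' : Fin J → ℝ) (hx' : x' ∈ R) (v u₀ : Fin J → ℝ)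
    (hseg : ∀ t : ℝ, 0 < t → t ≤ 1 → (fun j => (1 - t) * v j + t * u₀ j) ∈ A) :
    (((∑ j, v j * x' j) - ∑ j, v j * x j : ℝ) : EReal)
      ≤ ⨆ u ∈ A, ⨆ y ∈ R, (((∑ j, u j * y j) - ∑ j, u j * x j : ℝ) : EReal) := by
  set F : (Fin J → ℝ) → ℝ := fun u => (∑ j, u j * x' j) - ∑ j, u j * x j with hF
  have hm : ∀ n : ℕ, 0 < (1 : ℝ) / (n + 1) := fun n => by positivity
  have hm1 : ∀ n : ℕ, (1 : ℝ) / (n + 1) ≤ 1 := fun n => by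
    rw [div_le_one (by positivity)]
    have : (0:ℝ) ≤ (n : ℝ) := Nat.cast_nonneg n
    linarith
  have hFn : ∀ n : ℕ,
      ((F (fun j => (1 - 1/((n:ℝ)+1)) * v j + (1/((n:ℝ)+1)) * u₀ j) : ℝ) : EReal)
        ≤ ⨆ u ∈ A, ⨆ y ∈ R, (((∑ j, u j * y j) - ∑ j, u j * x j : ℝ) : EReal) := by
    intro n
    exact le_iSup₂_of_le _ (hseg (1/((n:ℝ)+1)) (hm n) (hm1 n))
      (le_iSup₂_of_le x' hx' le_rfl)
  have hlin : ∀ t : ℝ,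
      F (fun j => (1 - t) * v j + t * u₀ j) = F v + t * (F u₀ - F v) := by
    intro t
    simp only [hF, dot_combo]
    ring
  have htend : Tendsto
      (fun n : ℕ => F (fun j => (1 - 1/((n:ℝ)+1)) * v j + (1/((n:ℝ)+1)) * u₀ j))
      atTop (nhds (F v)) := by
    simp only [hlin]
    have h := (tendsto_one_div_add_atTop_nhds_zero_nat.mul_const (F u₀ - F v)).const_add (F v)
    simpa using h
  exact le_of_tendsto' ((EReal.tendsto_coe).2 htend) hFn

theorem offline_mmr_strict_eq_closed
    {J M K : ℕ} (B : Matrix (Fin M) (Fin J) ℝ) (b : Fin M → ℝ)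
    (hne : (U0 B b).Nonempty) (hbd : Bornology.IsBounded (U0 B b))
    (hint : (interior (U0 B b)).Nonempty)
    (Γ : ℝ) (hΓ : 0 ≤ Γ)
    (R : Set (Fin J → ℝ)) (hR : R.Nonempty)
    (d : Fin K → Fin J → ℝ) :
    (⨆ s ∈ {s : Fin K → ℤ | (∀ κ, s κ = -1 ∨ s κ = 0 ∨ s κ = 1) ∧
          (Ustrict B b Γ d s).Nonempty},
        ⨅ x ∈ R, ⨆ u ∈ Ustrict B b Γ d s, ⨆ x' ∈ R,
          (((∑ j, u j * x' j) - ∑ j, u j * x j : ℝ) : EReal))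
      = ⨆ s ∈ {s : Fin K → ℤ | ∀ κ, s κ = -1 ∨ s κ = 1},
        ⨅ x ∈ R, ⨆ u ∈ Utilde B b Γ d s, ⨆ x' ∈ R,
          (((∑ j, u j * x' j) - ∑ j, u j * x j : ℝ) : EReal) := by
  classical
  apply le_antisymm
  · -- strict ≤ closed
    refine iSup₂_le fun s hs => ?_
    obtain ⟨hsval, -⟩ := hs
    set s' : Fin K → ℤ := fun κ => if s κ = -1 then -1 else 1 with hs'def
    have hs'mem : s' ∈ {s : Fin K → ℤ | ∀ κ, s κ = -1 ∨ s κ = 1} := by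
      intro κ
      by_cases h : s κ = -1 <;> simp [hs'def, h]
    have hsub : Ustrict B b Γ d s ⊆ Utilde B b Γ d s' := by
      rintro u ⟨hu0, ε, hε, h1, h0, hm1⟩
      refine ⟨hu0, ε, hε, ?_, ?_⟩
      · intro κ h
        have h' : (if s κ = -1 then (-1:ℤ) else 1) = 1 := h
        have hne1 : s κ ≠ -1 := by
          intro hc
          rw [if_pos hc] at h'
          omega
        rcases hsval κ with hc | hc | hc
        · exact absurd hc hne1
        · exact neg_le_of_abs_le (h0 κ hc)
        · exact (h1 κ hc).le
      · intro κ h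
        have h' : (if s κ = -1 then (-1:ℤ) else 1) = -1 := h
        have hsκ : s κ = -1 := by
          by_contra hc
          rw [if_neg hc] at h'
          omega
        exact (hm1 κ hsκ).le
    refine le_iSup₂_of_le s' hs'mem ?_
    refine iInf₂_mono fun x _ => ?_
    exact iSup₂_le fun u hu => le_iSup₂_of_le u (hsub hu) le_rfl
  · -- closed ≤ strict
    refine iSup₂_le fun s hs => ?_
    by_cases hne' : (Utilde B b Γ d s).Nonempty
    · obtain ⟨s', u₀, hs'val, hseg⟩ := core B b Γ hΓ d s hs hne'
      obtain ⟨v₁, hv₁⟩ := hne'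
      have hU'ne : (Ustrict B b Γ d s').Nonempty :=
        ⟨_, hseg v₁ hv₁ 1 one_pos le_rfl⟩
      refine le_iSup₂_of_le s' ⟨hs'val, hU'ne⟩ ?_
      refine iInf₂_mono fun x _ => ?_
      refine iSup₂_le fun v hv => iSup₂_le fun x' hx' => ?_
      exact limit_lemma (Ustrict B b Γ d s') R x x' hx' v u₀
        (fun t ht ht1 => hseg v hv t ht ht1)
    · obtain ⟨x₀, hx₀⟩ := hR
      have hempty : Utilde B b Γ d s = ∅ := Set.not_nonempty_iff_eq_empty.1 hne'
      calc (⨅ x ∈ R, ⨆ u ∈ Utilde B b Γ d s, ⨆ x' ∈ R,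
              (((∑ j, u j * x' j) - ∑ j, u j * x j : ℝ) : EReal))
          ≤ ⨆ u ∈ Utilde B b Γ d s, ⨆ x' ∈ R,
              (((∑ j, u j * x' j) - ∑ j, u j * x₀ j : ℝ) : EReal) := iInf₂_le x₀ hx₀
        _ = ⊥ := by rw [hempty]; simp
        _ ≤ _ := bot_le

end
end

section
/- Assume {u ∈ ℝ^J : Bu ≥ b} is nonempty and bounded. Let Γ ≥ 0, d_1,…,d_K ∈ ℝ^J, s ∈ {−1,1}^K, and y ∈ ℝ^J. Then, in the extended reals, sup{ u·y : u ∈ ℝ^J for which there exists ε ∈ ℝ^K with ε ≥ 0, Σ_κ ε_κ ≤ Γ, s_κ (u·d_κ) + ε_κ ≥ 0 for all κ, and Bu ≥ b } = inf{ b·β + Γμ : α ∈ ℝ^K with α ≤ 0, β ∈ ℝ^M with β ≤ 0, μ ∈ ℝ with μ ≥ 0, Σ_κ s_κ α_κ d_κ + Bᵀβ = y, and α_κ + μ ≥ 0 for all κ }. In particular, this strong linear-programming duality holds even when the primal feasible set is empty, in which case both sides equal −∞. -/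
/-!
In the unknowns `(u, ε)` the inner problem is a linear program `max c ⬝ᵥ x` subject to
`A *ᵥ x ≤ r`, with dual `min r ⬝ᵥ z` subject to `0 ≤ z`, `z ᵥ* A = c`, and the multipliers
`(α, β, μ)` are read off from `z`. Weak duality gives `sup ≤ inf`. Since `{u | b ≤ B u}` is
nonempty and bounded it contains no ray, so by Farkas' lemma `y` is a nonpositive combination of
the rows of `B`: the dual is feasible. For an LP with a feasible dual, every real bound `t` on the
primal objective bounds some dual value; this is Farkas' lemma for the homogenized system
`A x ≤ τ r`, `0 ≤ τ`, where dual feasibility takes care of `τ = 0`. It needs no primal feasibility,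
which is why an empty primal forces `inf = ⊥`. Farkas' lemma comes from separation, because a
finitely generated cone is closed: by conic Carathéodory it is a finite union of images of
orthants under injective linear maps.
-/

open Matrix

section FinitelyGeneratedCone

variable {E : Type*} [AddCommGroup E] [Module ℝ E] {ι : Type*} [Fintype ι]

theorem exists_nonneg_sum_smul_eq_of_not_linearIndependent {v : ι → E}
    (hv : ¬LinearIndependent ℝ v) {l : ι → ℝ} (hl : 0 ≤ l) :
    ∃ i₀, ∃ l' : ι → ℝ, 0 ≤ l' ∧ l' i₀ = 0 ∧ ∑ i, l' i • v i = ∑ i, l i • v i := by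
  classical
  obtain ⟨g, hg, hpos⟩ : ∃ g : ι → ℝ, ∑ i, g i • v i = 0 ∧ ∃ i, 0 < g i := by
    obtain ⟨g, hg, i, hi⟩ := Fintype.not_linearIndependent_iff.1 hv
    rcases hi.lt_or_gt with hi | hi
    · exact ⟨-g, by simp [hg], i, by simpa using hi⟩
    · exact ⟨g, hg, i, hi⟩
  -- Move from `l` along `-g` until the first coefficient vanishes.
  obtain ⟨i₀, hi₀, hmin⟩ := Finset.exists_min_image {i | 0 < g i} (fun i => l i / g i)
    (by simpa [Finset.Nonempty] using hpos)
  rw [Finset.mem_filter_univ] at hi₀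
  set t := l i₀ / g i₀
  refine ⟨i₀, l - t • g, fun i => ?_, by simp [t, hi₀.ne'], ?_⟩
  · simp only [Pi.zero_apply, Pi.sub_apply, Pi.smul_apply, smul_eq_mul, sub_nonneg]
    rcases le_or_gt (g i) 0 with hgi | hgi
    · have hli : 0 ≤ l i := hl i
      have ht : 0 ≤ t := div_nonneg (hl i₀) hi₀.le
      linarith [mul_nonpos_of_nonneg_of_nonpos ht hgi]
    · exact (le_div_iff₀ hgi).1 (hmin i (by simpa using hgi))
  · simp [sub_smul, Finset.sum_sub_distrib, mul_smul, ← Finset.smul_sum, hg]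

theorem image_linearCombination_Ici_eq_iUnion_of_not_linearIndependent {v : ι → E}
    (hv : ¬LinearIndependent ℝ v) [DecidableEq ι] :
    Fintype.linearCombination ℝ v '' Set.Ici 0 =
      ⋃ i₀, Fintype.linearCombination ℝ (fun i : {i : ι // i ≠ i₀} => v i) '' Set.Ici 0 := by
  ext x
  simp only [Set.mem_image, Set.mem_Ici, Fintype.linearCombination_apply, Set.mem_iUnion]
  constructor
  · rintro ⟨l, hl, rfl⟩
    obtain ⟨i₀, l', hl', hi₀, hsum⟩ := exists_nonneg_sum_smul_eq_of_not_linearIndependent hv hl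
    exact ⟨i₀, fun i => l' i, fun i => hl' i, by
      rw [← hsum, Fintype.sum_eq_add_sum_subtype_ne _ i₀, hi₀, zero_smul, zero_add]⟩
  · rintro ⟨i₀, l, hl, rfl⟩
    refine ⟨fun i => if h : i = i₀ then 0 else l ⟨i, h⟩, fun i => ?_, ?_⟩
    · by_cases h : i = i₀
      · simp [h]
      · simpa [h] using hl ⟨i, h⟩
    · rw [Fintype.sum_eq_add_sum_subtype_ne _ i₀]
      simp only [dite_true, zero_smul, zero_add]
      exact Finset.sum_congr rfl fun i _ => by simp [i.2]

variable [TopologicalSpace E] [IsTopologicalAddGroup E] [ContinuousSMul ℝ E] [T2Space E]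

theorem isClosed_image_linearCombination_Ici_of_linearIndependent {v : ι → E}
    (hv : LinearIndependent ℝ v) : IsClosed (Fintype.linearCombination ℝ v '' Set.Ici 0) :=
  (LinearMap.isClosedEmbedding_of_injective (LinearMap.ker_eq_bot.2
    hv.fintypeLinearCombination_injective)).isClosedMap _ isClosed_Ici

theorem isClosed_image_linearCombination_Ici (v : ι → E) :
    IsClosed (Fintype.linearCombination ℝ v '' Set.Ici 0) := by
  classical
  induction hn : Fintype.card ι using Nat.strong_induction_on generalizing ι with
  | _ n ih =>
  by_cases hv : LinearIndependent ℝ v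
  · exact isClosed_image_linearCombination_Ici_of_linearIndependent hv
  rw [image_linearCombination_Ici_eq_iUnion_of_not_linearIndependent hv]
  exact isClosed_iUnion_of_finite fun i₀ =>
    ih _ (hn ▸ Fintype.card_subtype_lt (p := (· ≠ i₀)) (not_not.2 rfl)) _ rfl

theorem exists_nonneg_sum_smul_eq_of_forall_dual_nonneg [LocallyConvexSpace ℝ E] (v : ι → E)
    (x : E) (h : ∀ f : StrongDual ℝ E, (∀ i, 0 ≤ f (v i)) → 0 ≤ f x) :
    ∃ l : ι → ℝ, 0 ≤ l ∧ ∑ i, l i • v i = x := by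
  classical
  let C : ProperCone ℝ E :=
    ⟨(PointedCone.positive ℝ (ι → ℝ)).map (Fintype.linearCombination ℝ v),
      isClosed_image_linearCombination_Ici v⟩
  by_contra hx
  have hxC : x ∉ C := fun ⟨l, hl, hlx⟩ =>
    hx ⟨l, hl, by simpa [Fintype.linearCombination_apply] using hlx⟩
  obtain ⟨f, hfC, hfx⟩ := C.hyperplane_separation_point hxC
  refine (h f fun i => hfC _ ⟨Pi.single i 1, Pi.single_nonneg.2 zero_le_one, ?_⟩).not_gt hfx
  simp [Fintype.linearCombination_apply, Pi.single_apply]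

end FinitelyGeneratedCone

theorem eq_zero_of_forall_add_smul_mem_of_isBounded {E : Type*} [NormedAddCommGroup E]
    [NormedSpace ℝ E] {S : Set E} (hS : Bornology.IsBounded S) {u w : E}
    (h : ∀ t : ℝ, 0 ≤ t → u + t • w ∈ S) : w = 0 := by
  obtain ⟨C, hC⟩ := isBounded_iff_forall_norm_le.1 hS
  have hray (t : ℝ) (ht : 0 ≤ t) : t * ‖w‖ ≤ 2 * C := by
    have hu : ‖u‖ ≤ C := by simpa using hC _ (h 0 le_rfl)
    calc t * ‖w‖ = ‖u + t • w - u‖ := by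
          rw [add_sub_cancel_left, norm_smul, Real.norm_of_nonneg ht]
      _ ≤ ‖u + t • w‖ + ‖u‖ := norm_sub_le _ _
      _ ≤ 2 * C := by linarith [hC _ (h t ht)]
  by_contra hw
  have hw : 0 < ‖w‖ := norm_pos_iff.2 hw
  have hC : 0 ≤ C := by simpa using hray 0 le_rfl
  have := hray ((2 * C + 1) / ‖w‖) (by positivity)
  rw [div_mul_cancel₀ _ hw.ne'] at this
  linarith

namespace Matrix

variable {m n : Type*} [Fintype m] [Fintype n]

theorem exists_nonneg_vecMul_eq_of_forall_mulVec_nonneg (A : Matrix m n ℝ) (c : n → ℝ)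
    (h : ∀ x, 0 ≤ A *ᵥ x → 0 ≤ c ⬝ᵥ x) : ∃ y, 0 ≤ y ∧ y ᵥ* A = c := by
  classical
  have hf (f : StrongDual ℝ (n → ℝ)) (z : n → ℝ) : f z = z ⬝ᵥ fun j => f (Pi.single j 1) := by
    have hsingle (i : n) : (fun j => if i = j then (1 : ℝ) else 0) = Pi.single i 1 := by
      ext j
      simp [Pi.single_apply, eq_comm]
    simpa [dotProduct, hsingle] using LinearMap.pi_apply_eq_sum_univ f.toLinearMap z
  obtain ⟨y, hy, hyA⟩ := exists_nonneg_sum_smul_eq_of_forall_dual_nonneg A c fun f hfA => by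
    rw [hf]
    exact h _ fun i => by simpa [mulVec, ← hf] using hfA i
  exact ⟨y, hy, by rw [vecMul_eq_sum, hyA]⟩

theorem dotProduct_vecMul_le_of_mulVec_le {A : Matrix m n ℝ} {b : m → ℝ} {x : n → ℝ}
    {y : m → ℝ} (hx : A *ᵥ x ≤ b) (hy : 0 ≤ y) : (y ᵥ* A) ⬝ᵥ x ≤ b ⬝ᵥ y := by
  rw [← dotProduct_mulVec, dotProduct_comm b]
  exact dotProduct_le_dotProduct_of_nonneg_left hx hy

theorem exists_nonneg_vecMul_eq_dotProduct_le_of_forall_mulVec_le (A : Matrix m n ℝ)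
    (b : m → ℝ) (c : n → ℝ) (t : ℝ) (hdual : ∃ y, 0 ≤ y ∧ y ᵥ* A = c)
    (hprimal : ∀ x, A *ᵥ x ≤ b → c ⬝ᵥ x ≤ t) : ∃ y, 0 ≤ y ∧ y ᵥ* A = c ∧ b ⬝ᵥ y ≤ t := by
  -- The rows of this matrix encode `A x ≤ τ • b` and `0 ≤ τ` in the unknowns `(x, τ)`.
  have hhom : ∀ z : n ⊕ Unit → ℝ,
      0 ≤ fromBlocks (-A) (replicateCol Unit b) 0 (1 : Matrix Unit Unit ℝ) *ᵥ z →
      0 ≤ Sum.elim (-c) (fun _ => t) ⬝ᵥ z := by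
    intro z hz
    obtain ⟨x, τ, rfl⟩ : ∃ x τ, z = Sum.elim x fun _ => τ :=
      ⟨z ∘ Sum.inl, z (Sum.inr ()), by ext (i | i) <;> rfl⟩
    have hτ : 0 ≤ τ := by simpa [fromBlocks_mulVec] using hz (Sum.inr ())
    have hAx : A *ᵥ x ≤ τ • b := fun i => by
      simpa [fromBlocks_mulVec, mulVec, dotProduct, mul_comm] using hz (Sum.inl i)
    suffices c ⬝ᵥ x ≤ t * τ by simpa [sumElim_dotProduct_sumElim, dotProduct]
    rcases hτ.eq_or_lt with rfl | hτ
    · obtain ⟨y₀, hy₀, rfl⟩ := hdual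
      simpa using dotProduct_vecMul_le_of_mulVec_le (b := 0) (by simpa using hAx) hy₀
    · have hxτ : A *ᵥ (τ⁻¹ • x) ≤ b := by
        rw [mulVec_smul, ← inv_smul_smul₀ hτ.ne' b]
        exact smul_le_smul_of_nonneg_left hAx (inv_nonneg.2 hτ.le)
      have := hprimal _ hxτ
      rw [dotProduct_smul, smul_eq_mul, inv_mul_le_iff₀ hτ] at this
      linarith
  obtain ⟨w, hw, hwA⟩ := exists_nonneg_vecMul_eq_of_forall_mulVec_nonneg _ _ hhom
  rw [vecMul_fromBlocks] at hwA
  have hyA := congrArg (· ∘ Sum.inl) hwA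
  have hyb := congrFun hwA (Sum.inr ())
  simp only [Sum.elim_comp_inl, vecMul_neg, vecMul_zero, add_zero, neg_inj] at hyA
  simp only [Sum.elim_inr, mulVec_replicateCol_eq_const, vecMul_one, Pi.add_apply,
    Function.const_apply, Function.comp_apply] at hyb
  have hσ : 0 ≤ w (Sum.inr ()) := hw _
  exact ⟨w ∘ Sum.inl, fun i => hw _, hyA, by rw [dotProduct_comm]; linarith⟩

theorem exists_nonpos_vecMul_eq_of_isBounded (B : Matrix m n ℝ) (b : m → ℝ)
    (hne : {u | ∀ i, b i ≤ (B *ᵥ u) i}.Nonempty)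
    (hbd : Bornology.IsBounded {u | ∀ i, b i ≤ (B *ᵥ u) i}) (y : n → ℝ) :
    ∃ β, β ≤ 0 ∧ β ᵥ* B = y := by
  obtain ⟨u₀, hu₀⟩ := hne
  obtain ⟨l, hl, hlB⟩ := exists_nonneg_vecMul_eq_of_forall_mulVec_nonneg B (-y) fun w hw => by
    have hw0 : w = 0 := eq_zero_of_forall_add_smul_mem_of_isBounded hbd (u := u₀)
      fun t ht i => by
        have : 0 ≤ t * (B *ᵥ w) i := mul_nonneg ht (hw i)
        simp only [mulVec_add, mulVec_smul, Pi.add_apply, Pi.smul_apply, smul_eq_mul]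
        linarith [hu₀ i]
    simp [hw0]
  exact ⟨-l, neg_nonpos.2 hl, by rw [neg_vecMul, hlB, neg_neg]⟩

theorem sumElim_zero_dotProduct_sumElim {k : Type*} [Fintype k] (y u : n → ℝ) (ε : k → ℝ) :
    Sum.elim y 0 ⬝ᵥ Sum.elim u ε = ∑ j, u j * y j := by
  simp [dotProduct, mul_comm]

end Matrix

section Regret

variable {m n k : Type*}

def regretPrimal [Fintype n] [Fintype k] (B : Matrix m n ℝ) (b : m → ℝ) (Γ : ℝ)
    (d : k → n → ℝ) (s : k → ℝ) : Set (n → ℝ) :=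
  {u | (∃ ε : k → ℝ, (∀ κ, 0 ≤ ε κ) ∧ (∑ κ, ε κ) ≤ Γ ∧
      ∀ κ, 0 ≤ s κ * (∑ j, u j * d κ j) + ε κ) ∧ ∀ i, b i ≤ B.mulVec u i}

def regretDual [Fintype m] [Fintype k] (B : Matrix m n ℝ) (d : k → n → ℝ) (s : k → ℝ)
    (y : n → ℝ) : Set ((k → ℝ) × (m → ℝ) × ℝ) :=
  {p | (∀ κ, p.1 κ ≤ 0) ∧ (∀ i, p.2.1 i ≤ 0) ∧ 0 ≤ p.2.2 ∧
    (∀ j, (∑ κ, s κ * p.1 κ * d κ j) + (∑ i, B i j * p.2.1 i) = y j) ∧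
    ∀ κ, 0 ≤ p.1 κ + p.2.2}

def regretLPMatrix [DecidableEq k] (B : Matrix m n ℝ) (d : k → n → ℝ) (s : k → ℝ) :
    Matrix (m ⊕ k ⊕ k ⊕ Unit) (n ⊕ k) ℝ :=
  fromBlocks (-B) 0 (fromRows (-of fun κ j => s κ * d κ j) 0)
    (fromRows (-1) (fromRows (-1) (replicateRow Unit 1)))

def regretLPBound (b : m → ℝ) (Γ : ℝ) : m ⊕ k ⊕ k ⊕ Unit → ℝ :=
  Sum.elim (-b) (Sum.elim 0 (Sum.elim 0 fun _ => Γ))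

theorem regretLPMatrix_mulVec_le_iff [Fintype n] [Fintype k] [DecidableEq k]
    (B : Matrix m n ℝ) (b : m → ℝ) (Γ : ℝ) (d : k → n → ℝ) (s : k → ℝ) (u : n → ℝ)
    (ε : k → ℝ) :
    regretLPMatrix B d s *ᵥ Sum.elim u ε ≤ regretLPBound b Γ ↔
      ((∀ κ, 0 ≤ ε κ) ∧ (∑ κ, ε κ) ≤ Γ ∧ ∀ κ, 0 ≤ s κ * (∑ j, u j * d κ j) + ε κ) ∧
        ∀ i, b i ≤ B.mulVec u i := by
  have hrows : (of fun κ j => s κ * d κ j) *ᵥ u = fun κ => s κ * ∑ j, u j * d κ j := by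
    ext κ
    simp only [mulVec, dotProduct, of_apply, Finset.mul_sum]
    exact Finset.sum_congr rfl fun _ _ => by ring
  simp only [regretLPMatrix, regretLPBound, fromBlocks_mulVec, fromRows_mulVec,
    Sum.elim_comp_inl, Sum.elim_comp_inr, neg_mulVec, one_mulVec, zero_mulVec, add_zero,
    replicateRow_mulVec_eq_const, hrows, ← Sum.elim_add_add, Sum.elim_le_elim_iff]
  simp only [Pi.le_def, Pi.add_apply, Pi.neg_apply, Pi.zero_apply, neg_le_neg_iff, Sum.forall,
    Sum.elim_inl, Sum.elim_inr, zero_add, Function.const_apply, one_dotProduct, forall_const,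
    ← neg_add, neg_nonpos]
  tauto

theorem mem_regretPrimal_iff [Fintype n] [Fintype k] [DecidableEq k] (B : Matrix m n ℝ)
    (b : m → ℝ) (Γ : ℝ) (d : k → n → ℝ) (s : k → ℝ) (u : n → ℝ) :
    u ∈ regretPrimal B b Γ d s ↔
      ∃ ε, regretLPMatrix B d s *ᵥ Sum.elim u ε ≤ regretLPBound b Γ := by
  simp only [regretLPMatrix_mulVec_le_iff, regretPrimal, Set.mem_ofPred_eq, exists_and_right]

theorem sumElim_vecMul_regretLPMatrix [Fintype m] [Fintype k] [DecidableEq k]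
    (B : Matrix m n ℝ) (d : k → n → ℝ) (s : k → ℝ) (β : m → ℝ) (α ρ : k → ℝ) (μ : ℝ) :
    Sum.elim β (Sum.elim α (Sum.elim ρ fun _ => μ)) ᵥ* regretLPMatrix B d s =
      Sum.elim (fun j => -((∑ κ, s κ * α κ * d κ j) + ∑ i, B i j * β i))
        (fun κ => μ - α κ - ρ κ) := by
  ext (j | κ)
  · simp [regretLPMatrix, vecMul, dotProduct, mul_comm, mul_left_comm, add_comm]
  · simp [regretLPMatrix, vecMul, dotProduct, one_apply, sub_eq_add_neg, add_assoc, add_comm,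
      add_left_comm]

theorem exists_regretLP_dual_of_mem_regretDual [Fintype m] [Fintype k] [DecidableEq k]
    {B : Matrix m n ℝ} (b : m → ℝ) (Γ : ℝ) {d : k → n → ℝ} {s : k → ℝ} {y : n → ℝ}
    {p : (k → ℝ) × (m → ℝ) × ℝ} (hp : p ∈ regretDual B d s y) :
    ∃ z, 0 ≤ z ∧ z ᵥ* regretLPMatrix B d s = Sum.elim y 0 ∧
      regretLPBound b Γ ⬝ᵥ z = (∑ i, b i * p.2.1 i) + Γ * p.2.2 := by
  obtain ⟨α, β, μ⟩ := p
  obtain ⟨hα, hβ, hμ, hy, hαμ⟩ := hp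
  refine ⟨Sum.elim (-β) (Sum.elim (-α) (Sum.elim (α + fun _ => μ) fun _ => μ)), ?_, ?_, ?_⟩
  · rintro (i | κ | κ | ⟨⟩)
    · simpa using hβ i
    · simpa using hα κ
    · exact hαμ κ
    · exact hμ
  · rw [sumElim_vecMul_regretLPMatrix]
    ext (j | κ)
    · simpa [mul_neg, add_comm] using hy j
    · simp only [Sum.elim_inr, Pi.zero_apply, Pi.neg_apply, Pi.add_apply]
      ring
  · simp [regretLPBound, dotProduct]

theorem exists_mem_regretDual_of_regretLP_dual [Fintype m] [Fintype k] [DecidableEq k]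
    {B : Matrix m n ℝ} (b : m → ℝ) (Γ : ℝ) {d : k → n → ℝ} {s : k → ℝ} {y : n → ℝ}
    {z : m ⊕ k ⊕ k ⊕ Unit → ℝ} (hz : 0 ≤ z) (hzA : z ᵥ* regretLPMatrix B d s = Sum.elim y 0) :
    ∃ p ∈ regretDual B d s y, (∑ i, b i * p.2.1 i) + Γ * p.2.2 = regretLPBound b Γ ⬝ᵥ z := by
  obtain ⟨β, α, ρ, μ, rfl⟩ : ∃ β α ρ μ, z = Sum.elim β (Sum.elim α (Sum.elim ρ fun _ => μ)) :=
    ⟨z ∘ Sum.inl, z ∘ Sum.inr ∘ Sum.inl, z ∘ Sum.inr ∘ Sum.inr ∘ Sum.inl,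
      z (Sum.inr (Sum.inr (Sum.inr ()))), by ext (i | i | i | ⟨⟩) <;> rfl⟩
  rw [sumElim_vecMul_regretLPMatrix, Sum.elim_eq_iff] at hzA
  obtain ⟨hy, hρ⟩ := hzA
  refine ⟨(-α, -β, μ), ⟨fun κ => ?_, fun i => ?_, ?_, fun j => ?_, fun κ => ?_⟩, ?_⟩
  · simpa using hz (Sum.inr (Sum.inl κ))
  · simpa using hz (Sum.inl i)
  · simpa using hz (Sum.inr (Sum.inr (Sum.inr ())))
  · simpa [neg_eq_iff_eq_neg, add_comm] using congrFun hy j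
  · have hρκ : 0 ≤ ρ κ := hz (Sum.inr (Sum.inr (Sum.inl κ)))
    have := congrFun hρ κ
    simp only [Pi.zero_apply] at this
    show 0 ≤ -α κ + μ
    linarith
  · simp [regretLPBound, dotProduct]

theorem exists_mem_regretDual [Fintype m] [Fintype n] [Fintype k] (B : Matrix m n ℝ)
    (b : m → ℝ) (hne : {u | ∀ i, b i ≤ (B *ᵥ u) i}.Nonempty)
    (hbd : Bornology.IsBounded {u | ∀ i, b i ≤ (B *ᵥ u) i}) (d : k → n → ℝ) (s : k → ℝ)
    (y : n → ℝ) : ∃ p, p ∈ regretDual B d s y := by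
  obtain ⟨β, hβ, hβB⟩ := exists_nonpos_vecMul_eq_of_isBounded B b hne hbd y
  refine ⟨(0, β, 0), fun _ => le_rfl, hβ, le_rfl, fun j => ?_, fun _ => by simp⟩
  simpa [vecMul, dotProduct, mul_comm] using congrFun hβB j

theorem sum_mul_le_of_mem_regretPrimal_of_mem_regretDual [Fintype m] [Fintype n] [Fintype k]
    {B : Matrix m n ℝ} {b : m → ℝ} {Γ : ℝ} {d : k → n → ℝ} {s : k → ℝ} {y u : n → ℝ}
    {p : (k → ℝ) × (m → ℝ) × ℝ} (hu : u ∈ regretPrimal B b Γ d s)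
    (hp : p ∈ regretDual B d s y) : ∑ j, u j * y j ≤ (∑ i, b i * p.2.1 i) + Γ * p.2.2 := by
  classical
  obtain ⟨ε, hε⟩ := (mem_regretPrimal_iff B b Γ d s u).1 hu
  obtain ⟨z, hz, hzA, hval⟩ := exists_regretLP_dual_of_mem_regretDual b Γ hp
  have := dotProduct_vecMul_le_of_mulVec_le hε hz
  rwa [hzA, hval, sumElim_zero_dotProduct_sumElim] at this

theorem exists_mem_regretDual_le_of_forall_mem_regretPrimal_le [Fintype m] [Fintype n]
    [Fintype k] (B : Matrix m n ℝ) (b : m → ℝ) (hne : {u | ∀ i, b i ≤ (B *ᵥ u) i}.Nonempty)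
    (hbd : Bornology.IsBounded {u | ∀ i, b i ≤ (B *ᵥ u) i}) (Γ : ℝ) (d : k → n → ℝ)
    (s : k → ℝ) (y : n → ℝ) (t : ℝ) (h : ∀ u ∈ regretPrimal B b Γ d s, ∑ j, u j * y j ≤ t) :
    ∃ p ∈ regretDual B d s y, (∑ i, b i * p.2.1 i) + Γ * p.2.2 ≤ t := by
  classical
  obtain ⟨p₀, hp₀⟩ := exists_mem_regretDual B b hne hbd d s y
  obtain ⟨z₀, hz₀, hz₀A, -⟩ := exists_regretLP_dual_of_mem_regretDual b Γ hp₀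
  obtain ⟨z, hz, hzA, hzt⟩ := exists_nonneg_vecMul_eq_dotProduct_le_of_forall_mulVec_le _
    (regretLPBound b Γ) _ t ⟨z₀, hz₀, hz₀A⟩ fun x hx => by
      rw [← Sum.elim_comp_inl_inr x] at hx ⊢
      rw [sumElim_zero_dotProduct_sumElim]
      exact h _ ((mem_regretPrimal_iff B b Γ d s _).2 ⟨_, hx⟩)
  obtain ⟨p, hp, hval⟩ := exists_mem_regretDual_of_regretLP_dual b Γ hz hzA
  exact ⟨p, hp, hval ▸ hzt⟩

end Regret

theorem inner_max_regret_strong_duality_general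
    {J M K : ℕ} (B : Matrix (Fin M) (Fin J) ℝ) (b : Fin M → ℝ)
    (hne : {u : Fin J → ℝ | ∀ m, b m ≤ B.mulVec u m}.Nonempty)
    (hbd : Bornology.IsBounded {u : Fin J → ℝ | ∀ m, b m ≤ B.mulVec u m})
    (Γ : ℝ) (d : Fin K → Fin J → ℝ)
    (s : Fin K → ℤ)
    (y : Fin J → ℝ) :
    (⨆ u ∈ {u : Fin J → ℝ | (∃ ε : Fin K → ℝ, (∀ κ, 0 ≤ ε κ) ∧ (∑ κ, ε κ) ≤ Γ ∧
          ∀ κ, 0 ≤ (s κ : ℝ) * (∑ j, u j * d κ j) + ε κ) ∧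
          ∀ m, b m ≤ B.mulVec u m},
        ((∑ j, u j * y j : ℝ) : EReal))
      = ⨅ p ∈ {p : (Fin K → ℝ) × (Fin M → ℝ) × ℝ |
            (∀ κ, p.1 κ ≤ 0) ∧ (∀ m, p.2.1 m ≤ 0) ∧ 0 ≤ p.2.2 ∧
            (∀ j, (∑ κ, (s κ : ℝ) * p.1 κ * d κ j) + (∑ m, B m j * p.2.1 m) = y j) ∧
            ∀ κ, 0 ≤ p.1 κ + p.2.2},
        (((∑ m, b m * p.2.1 m) + Γ * p.2.2 : ℝ) : EReal) := by
  set s' : Fin K → ℝ := fun κ => s κ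
  change (⨆ u ∈ regretPrimal B b Γ d s', ((∑ j, u j * y j : ℝ) : EReal))
    = ⨅ p ∈ regretDual B d s' y, (((∑ m, b m * p.2.1 m) + Γ * p.2.2 : ℝ) : EReal)
  apply le_antisymm
  · exact iSup₂_le fun u hu => le_iInf₂ fun p hp => by
      exact_mod_cast sum_mul_le_of_mem_regretPrimal_of_mem_regretDual hu hp
  · refine EReal.le_of_forall_lt_iff_le.1 fun t ht => ?_
    obtain ⟨p, hp, hpt⟩ := exists_mem_regretDual_le_of_forall_mem_regretPrimal_le B b hne hbd Γ d
      s' y t fun u hu => by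
        have hle : ((∑ j, u j * y j : ℝ) : EReal) ≤
            ⨆ u ∈ regretPrimal B b Γ d s', ((∑ j, u j * y j : ℝ) : EReal) :=
          le_biSup (fun u => ((∑ j, u j * y j : ℝ) : EReal)) hu
        exact_mod_cast (hle.trans_lt ht).le
    exact (iInf₂_le p hp).trans (by exact_mod_cast hpt)

theorem inner_max_regret_strong_duality
    {J M K : ℕ} (B : Matrix (Fin M) (Fin J) ℝ) (b : Fin M → ℝ)
    (hne : {u : Fin J → ℝ | ∀ m, b m ≤ B.mulVec u m}.Nonempty)
    (hbd : Bornology.IsBounded {u : Fin J → ℝ | ∀ m, b m ≤ B.mulVec u m})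
    (Γ : ℝ) (hΓ : 0 ≤ Γ) (d : Fin K → Fin J → ℝ)
    (s : Fin K → ℤ) (hs : ∀ κ, s κ = -1 ∨ s κ = 1)
    (y : Fin J → ℝ) :
    (⨆ u ∈ {u : Fin J → ℝ | (∃ ε : Fin K → ℝ, (∀ κ, 0 ≤ ε κ) ∧ (∑ κ, ε κ) ≤ Γ ∧
          ∀ κ, 0 ≤ (s κ : ℝ) * (∑ j, u j * d κ j) + ε κ) ∧
          ∀ m, b m ≤ B.mulVec u m},
        ((∑ j, u j * y j : ℝ) : EReal))
      = ⨅ p ∈ {p : (Fin K → ℝ) × (Fin M → ℝ) × ℝ |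
            (∀ κ, p.1 κ ≤ 0) ∧ (∀ m, p.2.1 m ≤ 0) ∧ 0 ≤ p.2.2 ∧
            (∀ j, (∑ κ, (s κ : ℝ) * p.1 κ * d κ j) + (∑ m, B m j * p.2.1 m) = y j) ∧
            ∀ κ, 0 ≤ p.1 κ + p.2.2},
        (((∑ m, b m * p.2.1 m) + Γ * p.2.2 : ℝ) : EReal) :=
  inner_max_regret_strong_duality_general B b hne hbd Γ d s y
end
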